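/- arXiv:math/0311370 — 11 statements merged into one kernel-verified Lean document; each statement's English description precedes it below -/
import Mathlib

section
/- Let M be a matroid on a finite ground set E and let ω be a weight function on E. Then there exists a matroid M_ω with the same ground set E whose bases are exactly the ω-minimum bases of M. -/
open Matroid

/-- The ω-weight of a set `B`: the sum of `ω` over the elements of `B`. -/
noncomputable def baseWeight {α : Type*} (ω : α → ℝ) (B : Set α) : ℝ := ∑ᶠ e ∈ B, ω e

/-- `B` is an ω-minimum base of `M`: it is a base whose ω-weight is
minimal among all bases of `M`. -/
def IsMinBase {α : Type*} (M : Matroid α) (ω : α → ℝ) (B : Set α) : Prop :=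
  M.IsBase B ∧ ∀ B', M.IsBase B' → baseWeight ω B ≤ baseWeight ω B'

private lemma baseWeight_exchange {α : Type*} (ω : α → ℝ) {B : Set α} (hB : B.Finite)
    {x y : α} (hx : x ∈ B) (hy : y ∉ B) :
    baseWeight ω (insert y (B \ {x})) = ω y + baseWeight ω B - ω x := by
  have h1 : baseWeight ω (insert y (B \ {x})) = ω y + baseWeight ω (B \ {x}) :=
    finsum_mem_insert ω (fun h => hy h.1) (hB.diff)
  have h2 : baseWeight ω B = ω x + baseWeight ω (B \ {x}) := by
    have : B = insert x (B \ {x}) := by simp [Set.insert_diff_singleton, hx]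
    rw [show baseWeight ω B = baseWeight ω (insert x (B \ {x})) from by rw [← this]]
    exact finsum_mem_insert ω (fun h => h.2 rfl) (hB.diff)
  rw [h1, h2]; ring

/-- Symmetric exchange property for bases. -/
private lemma base_sym_exchange {α : Type*} (M : Matroid α) {B₁ B₂ : Set α}
    (hB₁ : M.IsBase B₁) (hB₂ : M.IsBase B₂) (hB₂fin : B₂.Finite) {x : α} (hx : x ∈ B₁ \ B₂) :
    ∃ y ∈ B₂ \ B₁, M.IsBase (insert y (B₁ \ {x})) ∧ M.IsBase (insert x (B₂ \ {y})) := by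
  have hxE : x ∈ M.E := hB₁.subset_ground hx.1
  have hxcl : x ∈ M.closure B₂ := by rw [hB₂.closure_eq]; exact hxE
  -- choose a minimal subset S of B₂ whose closure contains x
  set T : Set ℕ := {n | ∃ S : Set α, S ⊆ B₂ ∧ S.ncard = n ∧ x ∈ M.closure S} with hT
  have hTne : T.Nonempty := ⟨B₂.ncard, B₂, subset_rfl, rfl, hxcl⟩
  obtain ⟨S, hSB₂, hScard, hScl⟩ := Nat.sInf_mem hTne
  have hSfin : S.Finite := hB₂fin.subset hSB₂
  have hmin : ∀ y ∈ S, x ∉ M.closure (S \ {y}) := by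
    intro y hyS hcon
    have hlt : (S \ {y}).ncard < S.ncard := Set.ncard_diff_singleton_lt_of_mem hyS hSfin
    have : (S \ {y}).ncard ∈ T := ⟨S \ {y}, (Set.diff_subset).trans hSB₂, rfl, hcon⟩
    exact absurd (Nat.sInf_le this) (by omega)
  -- every element of S can be exchanged into B₂ for x
  have hclaim1 : ∀ y ∈ S, x ∉ M.closure (B₂ \ {y}) := by
    intro y hyS hcon
    have hxS : x ∈ M.closure (insert y (S \ {y})) := by
      rwa [Set.insert_diff_singleton, Set.insert_eq_of_mem hyS]
    have hex := Matroid.closure_exchange (M := M) (X := S \ {y}) (e := x) (f := y)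
      ⟨hxS, hmin y hyS⟩
    have hsub : insert x (S \ {y}) ⊆ M.closure (B₂ \ {y}) := by
      refine Set.insert_subset hcon ?_
      exact (Set.diff_subset_diff_left hSB₂).trans (M.subset_closure _ ((Set.diff_subset).trans hB₂.subset_ground))
    have : y ∈ M.closure (B₂ \ {y}) := by
      have := M.closure_subset_closure_of_subset_closure hsub hex.1
      rwa [] at this
    exact hB₂.indep.notMem_closure_diff_of_mem (hSB₂ hyS) this
  -- some element of S lies outside the closure of B₁ \ {x}
  have hclaim2 : ∃ y ∈ S, y ∉ M.closure (B₁ \ {x}) := by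
    by_contra hcon
    push_neg at hcon
    have : x ∈ M.closure (B₁ \ {x}) :=
      M.closure_subset_closure_of_subset_closure hcon hScl
    exact hB₁.indep.notMem_closure_diff_of_mem hx.1 this
  obtain ⟨y, hyS, hycl⟩ := hclaim2
  have hyB₂ : y ∈ B₂ := hSB₂ hyS
  have hyB₁ : y ∉ B₁ := by
    intro hyB₁
    have hyx : y ≠ x := fun h => hx.2 (h ▸ hyB₂)
    exact hycl (M.mem_closure_of_mem ⟨hyB₁, hyx⟩ ((Set.diff_subset).trans hB₁.subset_ground))
  refine ⟨y, ⟨hyB₂, hyB₁⟩, ?_, ?_⟩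
  · -- insert y (B₁ \ {x}) is a base
    have hI : M.Indep (insert y (B₁ \ {x})) := by
      rw [(hB₁.indep.subset Set.diff_subset).insert_indep_iff_of_notMem
        (fun h => hyB₁ h.1)]
      exact ⟨hB₂.subset_ground hyB₂, hycl⟩
    exact hB₁.exchange_isBase_of_indep hyB₁ hI
  · -- insert x (B₂ \ {y}) is a base
    have hI : M.Indep (insert x (B₂ \ {y})) := by
      rw [(hB₂.indep.subset Set.diff_subset).insert_indep_iff_of_notMem
        (fun h => hx.2 h.1)]
      exact ⟨hxE, hclaim1 y hyS⟩
    exact hB₂.exchange_isBase_of_indep (fun h => hx.2 h) hI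

/-- The collection of ω-minimum bases of a matroid `M` on a finite ground set is
itself the collection of bases of a matroid with the same ground set. -/
theorem exists_matroid_of_min_bases {α : Type*} (M : Matroid α) (hfin : M.E.Finite)
    (ω : α → ℝ) :
    ∃ Mω : Matroid α, Mω.E = M.E ∧ ∀ B : Set α, Mω.IsBase B ↔ IsMinBase M ω B := by
  -- there exists a minimum base
  have hBfin : ∀ B, M.IsBase B → B.Finite := fun B hB => hfin.subset hB.subset_ground
  have hsetfin : {B | M.IsBase B}.Finite :=
    (hfin.finite_subsets).subset (fun B hB => hB.subset_ground)
  obtain ⟨B₀, hB₀⟩ := M.exists_isBase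
  obtain ⟨B₀', hB₀'mem, hB₀'min⟩ :=
    Set.exists_min_image {B | M.IsBase B} (baseWeight ω) hsetfin ⟨B₀, hB₀⟩
  have exists_base : ∃ B, IsMinBase M ω B := ⟨B₀', hB₀'mem, fun B' hB' => hB₀'min B' hB'⟩
  -- exchange property
  have base_exchange : Matroid.ExchangeProperty (IsMinBase M ω) := by
    rintro B₁ B₂ ⟨hB₁, hB₁min⟩ ⟨hB₂, hB₂min⟩ x hx
    obtain ⟨y, hy, hbase1, hbase2⟩ := base_sym_exchange M hB₁ hB₂ (hBfin B₂ hB₂) hx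
    have hw1 : baseWeight ω (insert y (B₁ \ {x})) = ω y + baseWeight ω B₁ - ω x :=
      baseWeight_exchange ω (hBfin B₁ hB₁) hx.1 hy.2
    have hw2 : baseWeight ω (insert x (B₂ \ {y})) = ω x + baseWeight ω B₂ - ω y :=
      baseWeight_exchange ω (hBfin B₂ hB₂) hy.1 hx.2
    have hle1 : baseWeight ω B₁ ≤ ω y + baseWeight ω B₁ - ω x := hw1 ▸ hB₁min _ hbase1
    have hle2 : baseWeight ω B₂ ≤ ω x + baseWeight ω B₂ - ω y := hw2 ▸ hB₂min _ hbase2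
    have hxy : ω x = ω y := by linarith
    refine ⟨y, hy, hbase1, fun B' hB' => ?_⟩
    rw [hw1, ← hxy]
    have := hB₁min B' hB'
    linarith
  have subset_ground : ∀ B, IsMinBase M ω B → B ⊆ M.E := fun B hB => hB.1.subset_ground
  exact ⟨Matroid.ofIsBaseOfFinite hfin (IsMinBase M ω) exists_base base_exchange subset_ground,
    rfl, fun B => by simp⟩
end

section
/- Let M be a matroid on a finite ground set E and let ω be a weight function with flag ∅ = F_0 ⊂ F_1 ⊂ ⋯ ⊂ F_{k+1} = E. Then a base B of M is an ω-minimum base if and only if for every i with 1 ≤ i ≤ k+1, the set B ∩ (F_i ∖ F_{i−1}) has exactly r(F_i) − r(F_{i−1}) elements, where r is the rank function of M. -/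
open Matroid

/-- The rank of a set `X` in a matroid `M` : the maximum cardinality of an
independent subset of `X`. -/
noncomputable def matRank {α : Type*} (M : Matroid α) (X : Set α) : ℕ :=
  sSup {n : ℕ | ∃ I, M.Indep I ∧ I ⊆ X ∧ I.ncard = n}

section Aux

variable {α : Type*} {M : Matroid α}

lemma matRank_bddAbove (hfin : M.E.Finite) (X : Set α) :
    BddAbove {n : ℕ | ∃ I, M.Indep I ∧ I ⊆ X ∧ I.ncard = n} := by
  refine ⟨M.E.ncard, ?_⟩
  rintro n ⟨I, hI, -, rfl⟩
  exact Set.ncard_le_ncard hI.subset_ground hfin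

lemma le_matRank (hfin : M.E.Finite) {I X : Set α} (hI : M.Indep I) (hIX : I ⊆ X) :
    I.ncard ≤ matRank M X :=
  le_csSup (matRank_bddAbove hfin X) ⟨I, hI, hIX, rfl⟩

lemma matRank_le {X : Set α} {n : ℕ}
    (h : ∀ I, M.Indep I → I ⊆ X → I.ncard ≤ n) : matRank M X ≤ n :=
  csSup_le ⟨0, ∅, M.empty_indep, Set.empty_subset X, Set.ncard_empty α⟩
    (by rintro m ⟨I, hI, hIX, rfl⟩; exact h I hI hIX)

lemma matRank_empty (M : Matroid α) : matRank M (∅ : Set α) = 0 :=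
  Nat.le_zero.mp <| matRank_le fun I _ hI => by
    rw [Set.subset_empty_iff.mp hI, Set.ncard_empty]

lemma Matroid.IsBasis.ncard_eq_matRank (hfin : M.E.Finite) {I X : Set α}
    (hI : M.IsBasis I X) : I.ncard = matRank M X := by
  refine le_antisymm (le_matRank hfin hI.indep hI.subset) (matRank_le ?_)
  intro J hJ hJX
  obtain ⟨J', hJ', hJJ'⟩ := hJ.subset_isBasis_of_subset hJX hI.subset_ground
  have hJ'fin : J'.Finite := hfin.subset hJ'.indep.subset_ground
  have hcard : J'.ncard = I.ncard := by
    rw [Set.ncard_def, hJ'.encard_eq_encard hI, ← Set.ncard_def]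
  exact hcard ▸ Set.ncard_le_ncard hJJ' hJ'fin

lemma matRank_mono (hfin : M.E.Finite) {X Y : Set α} (hXY : X ⊆ Y) (hX : X ⊆ M.E) :
    matRank M X ≤ matRank M Y := by
  obtain ⟨I, hI⟩ := M.exists_isBasis X hX
  rw [← hI.ncard_eq_matRank hfin]
  exact le_matRank hfin hI.indep (hI.subset.trans hXY)

/-- Abel-type summation identity. -/
lemma abel_flag (k : ℕ) (A f : ℕ → ℝ) (h0 : f 0 = 0) (hk : f (k + 1) = 0) :
    ∑ j ∈ Finset.Icc 1 (k + 1), A (j - 1) * (f j - f (j - 1)) =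
      ∑ j ∈ Finset.Icc 1 k, (A (j - 1) - A j) * f j := by
  have hIcc : ∀ (n : ℕ) (g : ℕ → ℝ),
      ∑ j ∈ Finset.Icc 1 n, g j = ∑ i ∈ Finset.range n, g (i + 1) := by
    intro n g
    rw [← Finset.Ico_add_one_right_eq_Icc, Finset.sum_Ico_eq_sum_range]
    simp only [Nat.add_sub_cancel]
    exact Finset.sum_congr rfl fun i _ => by rw [add_comm]
  rw [hIcc, hIcc]
  simp only [Nat.add_sub_cancel]
  have expand : ∀ i : ℕ, A i * (f (i + 1) - f i) = A i * f (i + 1) - A i * f i := by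
    intro i; ring
  rw [Finset.sum_congr rfl fun i _ => expand i, Finset.sum_sub_distrib]
  rw [Finset.sum_range_succ (fun i => A i * f (i + 1)) k,
    Finset.sum_range_succ' (fun i => A i * f i) k]
  rw [hk, h0]
  simp only [mul_zero, add_zero]
  rw [← Finset.sum_sub_distrib]
  exact Finset.sum_congr rfl fun i _ => by ring

end Aux

/-- Let `ω` be a weight function whose distinct values on the ground set `M.E` are
`a 0 < a 1 < ⋯ < a k`, and let `∅ = F 0 ⊂ F 1 ⊂ ⋯ ⊂ F (k+1) = M.E` be the flag of
sublevel sets of `ω`.  Then a base `B` of `M` is an ω-minimum base if and only if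
`B ∩ (F i \ F (i-1))` has exactly `r (F i) - r (F (i-1))` elements for each
`1 ≤ i ≤ k+1`. -/
theorem isMinBase_iff_flag_cards {α : Type*} (M : Matroid α) (hfin : M.E.Finite)
    (ω : α → ℝ) (k : ℕ) (a : Fin (k + 1) → ℝ) (ha : StrictMono a)
    (hvals : ω '' M.E = Set.range a)
    (F : ℕ → Set α) (hF0 : F 0 = ∅)
    (hFsub : ∀ i : Fin (k + 1), F (i + 1 : ℕ) = {x ∈ M.E | ω x ≤ a i})
    (B : Set α) (hB : M.IsBase B) :
    IsMinBase M ω B ↔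
      ∀ i ∈ Finset.Icc 1 (k + 1),
        (B ∩ (F i \ F (i - 1))).ncard = matRank M (F i) - matRank M (F (i - 1)) := by
  classical
  -- extension of `a` to ℕ indices
  set A : ℕ → ℝ := fun j => a ⟨min j k, Nat.lt_succ_of_le (min_le_right _ _)⟩ with hA_def
  have hA : ∀ j (h : j ≤ k), A j = a ⟨j, Nat.lt_succ_of_le h⟩ := by
    intro j h
    simp only [hA_def]
    congr 1
    exact Fin.ext (by simp [Nat.min_eq_left h])
  -- description of the flag sets
  have hF : ∀ j, 1 ≤ j → j ≤ k + 1 → F j = {x ∈ M.E | ω x ≤ A (j - 1)} := by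
    intro j h1 h2
    have hjk : j - 1 ≤ k := by omega
    have := hFsub ⟨j - 1, Nat.lt_succ_of_le hjk⟩
    simp only [Fin.val_mk] at this
    rw [Nat.sub_add_cancel h1] at this
    rw [this, hA _ hjk]
  -- values of ω on the ground set
  have hω_mem : ∀ x ∈ M.E, ∃ t : Fin (k + 1), ω x = a t := by
    intro x hx
    have : ω x ∈ Set.range a := by
      rw [← hvals]; exact Set.mem_image_of_mem ω hx
    obtain ⟨t, ht⟩ := this
    exact ⟨t, ht.symm⟩
  -- the flag is monotone
  have hFm : ∀ i j, i ≤ j → j ≤ k + 1 → F i ⊆ F j := by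
    intro i j hij hj
    rcases Nat.eq_zero_or_pos i with rfl | hi
    · rw [hF0]; exact Set.empty_subset _
    · rw [hF i hi (le_trans hij hj), hF j (le_trans hi hij) hj]
      intro x hx
      refine ⟨hx.1, le_trans hx.2 ?_⟩
      rw [hA _ (by omega), hA _ (by omega)]
      exact ha.monotone (by simp [Fin.mk_le_mk]; omega)
  have hFE : ∀ j, j ≤ k + 1 → F j ⊆ M.E := by
    intro j hj
    rcases Nat.eq_zero_or_pos j with rfl | h1
    · rw [hF0]; exact Set.empty_subset _
    · rw [hF j h1 hj]; exact Set.sep_subset _ _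
  have hEF : M.E = F (k + 1) := by
    rw [hF (k + 1) (by omega) le_rfl]
    apply Set.Subset.antisymm
    · intro x hx
      obtain ⟨t, ht⟩ := hω_mem x hx
      refine ⟨hx, ?_⟩
      rw [Nat.add_sub_cancel, ht, hA k le_rfl]
      exact ha.monotone (by simp [Fin.le_def]; omega)
    · exact Set.sep_subset _ _
  -- ω is constant on each annulus
  have hω_const : ∀ j, 1 ≤ j → j ≤ k + 1 → ∀ x ∈ F j \ F (j - 1), ω x = A (j - 1) := by
    intro j h1 h2 x hx
    have hxj : x ∈ F j := hx.1
    rw [hF j h1 h2] at hxj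
    obtain ⟨t, ht⟩ := hω_mem x hxj.1
    have hle : ω x ≤ A (j - 1) := hxj.2
    rw [hA _ (by omega)] at hle ⊢
    rw [ht] at hle ⊢
    have htle : (t : ℕ) ≤ j - 1 := Fin.le_def.mp ((ha.le_iff_le).mp hle)
    have htge : j - 1 ≤ (t : ℕ) := by
      rcases Nat.lt_or_ge 1 j with hj2 | hj2
      · -- j ≥ 2
        have hxnot : x ∉ F (j - 1) := hx.2
        rw [hF (j - 1) (by omega) (by omega)] at hxnot
        have : ¬ ω x ≤ A (j - 1 - 1) := fun hc => hxnot ⟨hxj.1, hc⟩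
        rw [hA _ (by omega), ht] at this
        have hlt := (ha.lt_iff_lt).mp (lt_of_not_ge this)
        have : j - 1 - 1 < (t : ℕ) := Fin.lt_def.mp hlt
        omega
      · omega
    congr 1
    exact Fin.ext (show (t : ℕ) = j - 1 by omega)
  -- every element of the ground set lies in exactly one annulus
  have hannulus : ∀ x ∈ M.E, ∃ j, 1 ≤ j ∧ j ≤ k + 1 ∧ x ∈ F j \ F (j - 1) := by
    intro x hx
    have hxk : x ∈ F (k + 1) := by rw [← hEF]; exact hx
    have hne : {i : ℕ | x ∈ F i}.Nonempty := ⟨k + 1, hxk⟩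
    set j := sInf {i : ℕ | x ∈ F i} with hj_def
    have hjmem : x ∈ F j := Nat.sInf_mem hne
    have hjle : j ≤ k + 1 := Nat.sInf_le hxk
    have hj1 : 1 ≤ j := by
      by_contra h
      have : j = 0 := by omega
      rw [this, hF0] at hjmem
      exact hjmem
    have hnot : x ∉ F (j - 1) := fun hc =>
      (Nat.notMem_of_lt_sInf (show j - 1 < j by omega)) hc
    exact ⟨j, hj1, hjle, hjmem, hnot⟩
  -- finiteness facts
  have hFfin : ∀ S : Set α, S ⊆ M.E → S.Finite := fun S hS => hfin.subset hS
  -- weight formula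
  have Wform : ∀ S : Set α, S ⊆ M.E →
      baseWeight ω S = ∑ j ∈ Finset.Icc 1 (k + 1),
        A (j - 1) * ((((S ∩ F j).ncard : ℝ)) - ((S ∩ F (j - 1)).ncard : ℝ)) := by
    intro S hS
    have hSfin := hFfin S hS
    -- partition of S into annuli
    have hpart : S = ⋃ j ∈ (Set.Icc 1 (k + 1) : Set ℕ), S ∩ (F j \ F (j - 1)) := by
      apply Set.Subset.antisymm
      · intro x hx
        obtain ⟨j, h1, h2, hx'⟩ := hannulus x (hS hx)
        exact Set.mem_biUnion (Set.mem_Icc.mpr ⟨h1, h2⟩) ⟨hx, hx'⟩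
      · exact Set.iUnion₂_subset fun j _ => Set.inter_subset_left
    have hdisj : (Set.Icc 1 (k + 1) : Set ℕ).PairwiseDisjoint
        (fun j => S ∩ (F j \ F (j - 1))) := by
      have hd : ∀ i j, i < j → j ≤ k + 1 →
          Disjoint (S ∩ (F i \ F (i - 1))) (S ∩ (F j \ F (j - 1))) := by
        intro i j hlt hj
        refine Set.disjoint_left.mpr ?_
        rintro x ⟨-, hxi, -⟩ ⟨-, -, hxj⟩
        exact hxj (hFm i (j - 1) (by omega) (by omega) hxi)
      intro i hi j hj hij
      simp only [Set.mem_Icc] at hi hj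
      rcases lt_or_gt_of_ne hij with h | h
      · exact hd i j h hj.2
      · exact (hd j i h hi.2).symm
    have hwt : baseWeight ω S =
        ∑ᶠ j ∈ (Set.Icc 1 (k + 1) : Set ℕ), ∑ᶠ e ∈ S ∩ (F j \ F (j - 1)), ω e := by
      rw [baseWeight]
      conv_lhs => rw [hpart]
      exact finsum_mem_biUnion hdisj (Set.finite_Icc _ _)
        (fun i _ => hSfin.subset Set.inter_subset_left)
    rw [hwt]
    have hIccCoe : (Set.Icc 1 (k + 1) : Set ℕ) = ↑(Finset.Icc 1 (k + 1)) := by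
      simp
    rw [hIccCoe, finsum_mem_coe_finset]
    apply Finset.sum_congr rfl
    intro j hj
    rw [Finset.mem_Icc] at hj
    -- inner sum is constant A (j-1) on the annulus
    have hann_fin : (S ∩ (F j \ F (j - 1))).Finite := hSfin.subset Set.inter_subset_left
    have hconst : ∑ᶠ e ∈ S ∩ (F j \ F (j - 1)), ω e =
        ((S ∩ (F j \ F (j - 1))).ncard : ℝ) * A (j - 1) := by
      rw [← hann_fin.coe_toFinset, finsum_mem_coe_finset]
      rw [Finset.sum_congr rfl (fun e he => ?_)]
      · rw [Finset.sum_const, hann_fin.coe_toFinset,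
          Set.ncard_eq_toFinset_card _ hann_fin, nsmul_eq_mul]
      · rw [hann_fin.mem_toFinset] at he
        exact hω_const j hj.1 hj.2 e he.2
    rw [hconst]
    -- telescoping of cardinalities
    have hsubset : S ∩ F (j - 1) ⊆ S ∩ F j :=
      Set.inter_subset_inter_right _ (hFm (j - 1) j (by omega) hj.2)
    have hdiffeq : S ∩ (F j \ F (j - 1)) = (S ∩ F j) \ (S ∩ F (j - 1)) := by
      ext x
      simp only [Set.mem_inter_iff, Set.mem_diff]
      tauto
    have hfinj : (S ∩ F j).Finite := hSfin.subset Set.inter_subset_left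
    have hcard : (S ∩ (F j \ F (j - 1))).ncard + (S ∩ F (j - 1)).ncard
        = (S ∩ F j).ncard := by
      rw [hdiffeq]
      exact Set.ncard_diff_add_ncard_of_subset hsubset hfinj
    have : ((S ∩ (F j \ F (j - 1))).ncard : ℝ)
        = ((S ∩ F j).ncard : ℝ) - ((S ∩ F (j - 1)).ncard : ℝ) := by
      have := congrArg (Nat.cast (R := ℝ)) hcard
      push_cast at this
      linarith
    rw [this]
    ring
  -- cardinality bound
  have hcount_le : ∀ (B' : Set α), M.IsBase B' → ∀ j, j ≤ k + 1 →
      (B' ∩ F j).ncard ≤ matRank M (F j) := by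
    intro B' hB' j hj
    exact le_matRank hfin (hB'.indep.subset Set.inter_subset_left) Set.inter_subset_right
  -- comparison of weights of two bases
  have key : ∀ B₁ B₂ : Set α, M.IsBase B₁ → M.IsBase B₂ →
      baseWeight ω B₂ - baseWeight ω B₁ =
        ∑ j ∈ Finset.Icc 1 k, (A (j - 1) - A j) *
          (((B₂ ∩ F j).ncard : ℝ) - ((B₁ ∩ F j).ncard : ℝ)) := by
    intro B₁ B₂ hB₁ hB₂
    set f : ℕ → ℝ := fun i => ((B₂ ∩ F i).ncard : ℝ) - ((B₁ ∩ F i).ncard : ℝ) with hf_def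
    have hf0 : f 0 = 0 := by simp [hf_def, hF0]
    have hfk : f (k + 1) = 0 := by
      have h1 : B₁ ∩ F (k + 1) = B₁ := by
        rw [Set.inter_eq_left]; exact hEF ▸ hB₁.subset_ground
      have h2 : B₂ ∩ F (k + 1) = B₂ := by
        rw [Set.inter_eq_left]; exact hEF ▸ hB₂.subset_ground
      simp only [hf_def, h1, h2]
      rw [hB₂.ncard_eq_ncard_of_isBase hB₁]
      ring
    have := abel_flag k A f hf0 hfk
    rw [Wform B₁ hB₁.subset_ground, Wform B₂ hB₂.subset_ground, ← Finset.sum_sub_distrib]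
    calc ∑ j ∈ Finset.Icc 1 (k + 1),
          (A (j - 1) * (((B₂ ∩ F j).ncard : ℝ) - ((B₂ ∩ F (j - 1)).ncard : ℝ))
            - A (j - 1) * (((B₁ ∩ F j).ncard : ℝ) - ((B₁ ∩ F (j - 1)).ncard : ℝ)))
        = ∑ j ∈ Finset.Icc 1 (k + 1), A (j - 1) * (f j - f (j - 1)) := by
          apply Finset.sum_congr rfl
          intro j _
          simp only [hf_def]
          ring
      _ = ∑ j ∈ Finset.Icc 1 k, (A (j - 1) - A j) * f j := this
      _ = _ := rfl
  -- strict monotonicity of A on [0, k]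
  have hAlt : ∀ j, 1 ≤ j → j ≤ k → A (j - 1) < A j := by
    intro j h1 h2
    rw [hA _ (by omega), hA _ h2]
    exact ha (by simp [Fin.lt_def]; omega)
  -- greedy construction of an optimal base
  have greedy : ∀ j, j ≤ k + 1 → ∃ I, M.IsBasis I (F j) ∧
      ∀ i, i ≤ j → (I ∩ F i).ncard = matRank M (F i) := by
    intro j
    induction j with
    | zero =>
      intro _
      refine ⟨∅, by rw [hF0]; exact M.empty_indep.isBasis_self, ?_⟩
      intro i hi
      rw [Nat.le_zero.mp hi, hF0, matRank_empty]
      simp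
    | succ j ih =>
      intro hj
      obtain ⟨I, hI, hIcard⟩ := ih (by omega)
      have hIsub : I ⊆ F (j + 1) := hI.subset.trans (hFm j (j + 1) (by omega) hj)
      obtain ⟨J, hJ, hIJ⟩ := hI.indep.subset_isBasis_of_subset hIsub (hFE (j + 1) hj)
      refine ⟨J, hJ, ?_⟩
      intro i hi
      rcases Nat.lt_or_ge i (j + 1) with hlt | hge
      · -- i ≤ j
        have hi' : i ≤ j := by omega
        apply le_antisymm
        · exact le_matRank hfin (hJ.indep.subset Set.inter_subset_left)
            Set.inter_subset_right
        · rw [← hIcard i hi']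
          exact Set.ncard_le_ncard (Set.inter_subset_inter_left _ hIJ)
            ((hfin.subset hJ.indep.subset_ground).subset Set.inter_subset_left)
      · -- i = j + 1
        have : i = j + 1 := by omega
        subst this
        rw [Set.inter_eq_left.mpr hJ.subset]
        exact hJ.ncard_eq_matRank hfin
  obtain ⟨B₀, hB₀basis, hB₀card⟩ := greedy (k + 1) le_rfl
  have hB₀ : M.IsBase B₀ := by
    rw [← Matroid.isBasis_ground_iff, hEF]; exact hB₀basis
  -- the count condition on [1, k+1] is equivalent to `(B'∩F i).ncard = matRank (F i)` ∀ i
  have hrank_mono : ∀ i, i ≤ k → matRank M (F i) ≤ matRank M (F (i + 1)) := by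
    intro i hi
    exact matRank_mono hfin (hFm i (i + 1) (by omega) (by omega)) (hFE i (by omega))
  -- translation between annulus counts and cumulative counts
  have hannulus_card : ∀ (S : Set α), S ⊆ M.E → ∀ j, 1 ≤ j → j ≤ k + 1 →
      (S ∩ (F j \ F (j - 1))).ncard = (S ∩ F j).ncard - (S ∩ F (j - 1)).ncard := by
    intro S hS j h1 h2
    have hdiffeq : S ∩ (F j \ F (j - 1)) = (S ∩ F j) \ (S ∩ F (j - 1)) := by
      ext x
      simp only [Set.mem_inter_iff, Set.mem_diff]
      tauto
    rw [hdiffeq]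
    exact Set.ncard_diff (Set.inter_subset_inter_right _ (hFm (j - 1) j (by omega) h2))
      ((hFfin S hS).subset Set.inter_subset_left)
  constructor
  · -- min base → counts
    rintro ⟨-, hmin⟩
    -- first show (B ∩ F i).ncard = matRank M (F i) for all i ≤ k + 1
    have hcounts : ∀ i, i ≤ k + 1 → (B ∩ F i).ncard = matRank M (F i) := by
      have hdiff := key B₀ B hB₀ hB
      have hle : baseWeight ω B - baseWeight ω B₀ ≤ 0 :=
        sub_nonpos.mpr (hmin B₀ hB₀)
      rw [hdiff] at hle
      have hterm_nonneg : ∀ j ∈ Finset.Icc 1 k,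
          0 ≤ (A (j - 1) - A j) * (((B ∩ F j).ncard : ℝ) - ((B₀ ∩ F j).ncard : ℝ)) := by
        intro j hj
        rw [Finset.mem_Icc] at hj
        have h1 : A (j - 1) - A j < 0 := sub_neg.mpr (hAlt j hj.1 hj.2)
        have h2 : ((B ∩ F j).ncard : ℝ) - ((B₀ ∩ F j).ncard : ℝ) ≤ 0 := by
          rw [hB₀card j (by omega)]
          have := hcount_le B hB j (by omega)
          exact sub_nonpos.mpr (by exact_mod_cast this)
        nlinarith [h1.le, h2]
      have hsum_zero : ∀ j ∈ Finset.Icc 1 k,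
          (A (j - 1) - A j) * (((B ∩ F j).ncard : ℝ) - ((B₀ ∩ F j).ncard : ℝ)) = 0 := by
        have := Finset.sum_nonneg hterm_nonneg
        have hzero : ∑ j ∈ Finset.Icc 1 k, (A (j - 1) - A j) *
            (((B ∩ F j).ncard : ℝ) - ((B₀ ∩ F j).ncard : ℝ)) = 0 := le_antisymm hle this
        exact (Finset.sum_eq_zero_iff_of_nonneg hterm_nonneg).mp hzero
      intro i hi
      rcases Nat.eq_zero_or_pos i with rfl | h1
      · rw [hF0, matRank_empty]; simp
      rcases Nat.lt_or_ge i (k + 1) with hlt | hge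
      · -- 1 ≤ i ≤ k : from the zero terms
        have := hsum_zero i (Finset.mem_Icc.mpr ⟨h1, by omega⟩)
        have hAne : A (i - 1) - A i ≠ 0 := ne_of_lt (sub_neg.mpr (hAlt i h1 (by omega)))
        have := (mul_eq_zero.mp this).resolve_left hAne
        have hcast : ((B ∩ F i).ncard : ℝ) = ((B₀ ∩ F i).ncard : ℝ) := by linarith [sub_eq_zero.mp this]
        have : (B ∩ F i).ncard = (B₀ ∩ F i).ncard := by exact_mod_cast hcast
        rw [this, hB₀card i (by omega)]
      · -- i = k + 1
        have : i = k + 1 := by omega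
        subst this
        have h1' : B ∩ F (k + 1) = B := by
          rw [Set.inter_eq_left]; exact hEF ▸ hB.subset_ground
        have h2' : B₀ ∩ F (k + 1) = B₀ := by
          rw [Set.inter_eq_left]; exact hEF ▸ hB₀.subset_ground
        rw [h1', ← hB₀card (k + 1) le_rfl, h2', hB.ncard_eq_ncard_of_isBase hB₀]
    intro i hi
    rw [Finset.mem_Icc] at hi
    rw [hannulus_card B hB.subset_ground i hi.1 hi.2,
      hcounts i hi.2, hcounts (i - 1) (by omega)]
  · -- counts → min base
    intro hcond
    -- cumulative counts equal ranks
    have hcounts : ∀ i, i ≤ k + 1 → (B ∩ F i).ncard = matRank M (F i) := by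
      intro i
      induction i with
      | zero => intro _; rw [hF0, matRank_empty]; simp
      | succ i ih =>
        intro hi
        have ihi := ih (by omega)
        have hann := hcond (i + 1) (Finset.mem_Icc.mpr ⟨by omega, hi⟩)
        rw [Nat.add_sub_cancel] at hann
        have hsubset : B ∩ F i ⊆ B ∩ F (i + 1) :=
          Set.inter_subset_inter_right _ (hFm i (i + 1) (by omega) hi)
        have hdiffeq : B ∩ (F (i + 1) \ F i) = (B ∩ F (i + 1)) \ (B ∩ F i) := by
          ext x
          simp only [Set.mem_inter_iff, Set.mem_diff]
          tauto
        have hfinB : (B ∩ F (i + 1)).Finite :=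
          (hfin.subset hB.subset_ground).subset Set.inter_subset_left
        have hcard : (B ∩ (F (i + 1) \ F i)).ncard + (B ∩ F i).ncard
            = (B ∩ F (i + 1)).ncard := by
          rw [hdiffeq]
          exact Set.ncard_diff_add_ncard_of_subset hsubset hfinB
        have hrm := hrank_mono i (by omega)
        have hcle := hcount_le B hB (i + 1) hi
        omega
    refine ⟨hB, ?_⟩
    intro B' hB'
    have hdiff := key B B' hB hB'
    have : 0 ≤ baseWeight ω B' - baseWeight ω B := by
      rw [hdiff]
      apply Finset.sum_nonneg
      intro j hj
      rw [Finset.mem_Icc] at hj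
      have h1 : A (j - 1) - A j < 0 := sub_neg.mpr (hAlt j hj.1 hj.2)
      have h2 : ((B' ∩ F j).ncard : ℝ) - ((B ∩ F j).ncard : ℝ) ≤ 0 := by
        rw [hcounts j (by omega)]
        have := hcount_le B' hB' j (by omega)
        exact sub_nonpos.mpr (by exact_mod_cast this)
      nlinarith [h1.le, h2]
    linarith
end

section
/- Let M be a matroid on a finite ground set E and let ω and ω′ be two weight functions on E inducing the same flag; equivalently, for all x, y ∈ E one has ω(x) ≤ ω(y) if and only if ω′(x) ≤ ω′(y). Then a base of M is an ω-minimum base if and only if it is an ω′-minimum base. -/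
open Matroid

lemma baseWeight_eq_sum {α : Type*} (ω : α → ℝ) {B : Set α} (hB : B.Finite) :
    baseWeight ω B = ∑ e ∈ hB.toFinset, ω e := by
  rw [baseWeight, ← finsum_mem_coe_finset, Set.Finite.coe_toFinset]

lemma multiset_exists_max (s : Multiset ℝ) (h : s ≠ 0) : ∃ m ∈ s, ∀ x ∈ s, x ≤ m := by
  induction s using Multiset.induction with
  | empty => exact absurd rfl h
  | cons a t ih =>
    rcases eq_or_ne t 0 with rfl | ht
    · exact ⟨a, by simp, by simp⟩
    · obtain ⟨m, hm, hmax⟩ := ih ht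
      rcases le_total a m with hle | hle
      · exact ⟨m, Multiset.mem_cons_of_mem hm, by
          intro x hx
          rcases Multiset.mem_cons.1 hx with rfl | hx
          · exact hle
          · exact hmax x hx⟩
      · exact ⟨a, Multiset.mem_cons_self a t, by
          intro x hx
          rcases Multiset.mem_cons.1 hx with rfl | hx
          · exact le_rfl
          · exact (hmax x hx).trans hle⟩

/-- Majorization lemma: if two real multisets have the same cardinality, and for every
threshold `r` the second has at least as many elements `≤ r` as the first, then the sum
of the second is at most the sum of the first. -/
lemma multiset_sum_le_of_counts :
    ∀ (n : ℕ) (s t : Multiset ℝ), s.card = n → t.card = n →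
    (∀ r : ℝ, (t.filter (fun x => x ≤ r)).card ≤ (s.filter (fun x => x ≤ r)).card) →
    s.sum ≤ t.sum := by
  intro n
  induction n with
  | zero =>
    intro s t hs ht _
    rw [Multiset.card_eq_zero.1 hs, Multiset.card_eq_zero.1 ht]
  | succ n ih =>
    intro s t hs ht hcount
    have hsne : s ≠ 0 := by
      intro h; rw [h] at hs; simp at hs
    have htne : t ≠ 0 := by
      intro h; rw [h] at ht; simp at ht
    obtain ⟨m, hm, hmmax⟩ := multiset_exists_max s hsne
    obtain ⟨M, hM, hMmax⟩ := multiset_exists_max t htne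
    have hsc : s = m ::ₘ s.erase m := (Multiset.cons_erase hm).symm
    have htc : t = M ::ₘ t.erase M := (Multiset.cons_erase hM).symm
    set s' := s.erase m with hs'
    set t' := t.erase M with ht'
    have hs'card : s'.card = n := by
      have := congrArg Multiset.card hsc
      simp only [Multiset.card_cons] at this
      omega
    have ht'card : t'.card = n := by
      have := congrArg Multiset.card htc
      simp only [Multiset.card_cons] at this
      omega
    -- m ≤ M
    have hmM : m ≤ M := by
      by_contra hlt
      push_neg at hlt
      have h1 : (t.filter (fun x => x ≤ M)).card = n + 1 := by
        rw [Multiset.filter_eq_self.2 (fun x hx => hMmax x hx), ht]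
      have h2 : (s.filter (fun x => x ≤ M)).card ≤ n := by
        have : s.filter (fun x => x ≤ M) = s'.filter (fun x => x ≤ M) := by
          rw [hsc, Multiset.filter_cons, if_neg (not_le.2 hlt)]
          simp
        rw [this]
        exact le_trans (Multiset.card_le_card (Multiset.filter_le _ _)) (le_of_eq hs'card)
      have := hcount M
      omega
    -- counts condition for s', t'
    have hcount' : ∀ r : ℝ,
        (t'.filter (fun x => x ≤ r)).card ≤ (s'.filter (fun x => x ≤ r)).card := by
      intro r
      have hts : (t.filter (fun x => x ≤ r)).card ≤ (s.filter (fun x => x ≤ r)).card :=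
        hcount r
      have hseq : (s.filter (fun x => x ≤ r)).card
          = (s'.filter (fun x => x ≤ r)).card + (if m ≤ r then 1 else 0) := by
        rw [hsc, Multiset.filter_cons]
        split <;> simp
      have hteq : (t.filter (fun x => x ≤ r)).card
          = (t'.filter (fun x => x ≤ r)).card + (if M ≤ r then 1 else 0) := by
        rw [htc, Multiset.filter_cons]
        split <;> simp
      by_cases hMr : M ≤ r
      · have hmr : m ≤ r := hmM.trans hMr
        rw [hseq, hteq, if_pos hMr, if_pos hmr] at hts
        omega
      · by_cases hmr : m ≤ r
        · -- all of s is ≤ m ≤ r, so s' filter is everything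
          have : s'.filter (fun x => x ≤ r) = s' := by
            refine Multiset.filter_eq_self.2 fun x hx => ?_
            exact (hmmax x (by rw [hsc]; exact Multiset.mem_cons_of_mem hx)).trans hmr
          rw [this, hs'card]
          exact le_trans (Multiset.card_le_card (Multiset.filter_le _ _)) (le_of_eq ht'card)
        · rw [hseq, hteq, if_neg hMr, if_neg hmr] at hts
          omega
    have hsum := ih s' t' hs'card ht'card hcount'
    calc s.sum = m + s'.sum := by rw [hsc, Multiset.sum_cons]
    _ ≤ M + t'.sum := add_le_add hmM hsum
    _ = t.sum := by rw [htc, Multiset.sum_cons]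

/-- If `I` is independent and contained in the closure of the independent set `J`,
then `I.encard ≤ J.encard`. -/
lemma encard_le_of_indep_subset_closure {α : Type*} {M : Matroid α} {I J : Set α}
    (hI : M.Indep I) (hJ : M.Indep J) (hIJ : I ⊆ M.closure J) : I.encard ≤ J.encard := by
  obtain ⟨K, hK, hIK⟩ := hI.subset_isBasis_of_subset hIJ (M.closure_subset_ground J)
  have hJK : K.encard = J.encard := hK.encard_eq_encard hJ.isBasis_closure
  exact (Set.encard_mono hIK).trans hJK.le

/-- A base `B` is an `ω`-minimum base iff every element `x` of the ground set lies in the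
closure of the set of elements of `B` of weight at most `ω x`. This characterization only
depends on the ordering that `ω` induces on the ground set. -/
lemma isMinBase_iff_closure {α : Type*} (M : Matroid α) (hfin : M.E.Finite)
    (ω : α → ℝ) (B : Set α) :
    IsMinBase M ω B ↔
      M.IsBase B ∧ ∀ x ∈ M.E, x ∈ M.closure {y ∈ B | ω y ≤ ω x} := by
  constructor
  · rintro ⟨hB, hmin⟩
    refine ⟨hB, fun x hx => ?_⟩
    by_contra hxcl
    set Bx : Set α := {y ∈ B | ω y ≤ ω x} with hBx
    have hBxB : Bx ⊆ B := fun y hy => hy.1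
    have hxB : x ∉ B := by
      intro hxB
      exact hxcl (M.subset_closure Bx (hBxB.trans hB.subset_ground) ⟨hxB, le_rfl⟩)
    have hxBx : x ∉ Bx := fun h => hxB (hBxB h)
    have hBxindep : M.Indep Bx := hB.indep.subset hBxB
    have hIindep : M.Indep (insert x Bx) := by
      rw [hBxindep.insert_indep_iff_of_notMem hxBx]
      exact ⟨hx, hxcl⟩
    obtain ⟨B'', hB'', hIB'', hB''sub⟩ := hIindep.exists_isBase_subset_union_isBase hB
    have hB''insert : B'' ⊆ insert x B := by
      refine hB''sub.trans ?_
      rintro y (hy | hy)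
      · rcases hy with rfl | hy
        · exact Set.mem_insert _ _
        · exact Set.mem_insert_of_mem _ (hBxB hy)
      · exact Set.mem_insert_of_mem _ hy
    have hxB'' : x ∈ B'' := hIB'' (Set.mem_insert _ _)
    have hdiff : B'' \ B = {x} := by
      apply Set.Subset.antisymm
      · intro y hy
        rcases hB''insert hy.1 with rfl | h
        · rfl
        · exact absurd h hy.2
      · rintro y rfl
        exact ⟨hxB'', hxB⟩
    have hdiff2 : (B \ B'').encard = 1 := by
      rw [hB.encard_diff_comm hB'', hdiff, Set.encard_singleton]
    obtain ⟨f, hf⟩ := Set.encard_eq_one.1 hdiff2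
    have hfB : f ∈ B := by
      have : f ∈ B \ B'' := by rw [hf]; rfl
      exact this.1
    have hfB'' : f ∉ B'' := by
      have : f ∈ B \ B'' := by rw [hf]; rfl
      exact this.2
    have hfBx : f ∉ Bx := fun h => hfB'' (hIB'' (Set.mem_insert_of_mem _ h))
    have hωf : ω x < ω f := by
      by_contra h
      exact hfBx ⟨hfB, le_of_not_gt h⟩
    -- B'' = insert x (B \ {f})
    have hB''eq : B'' = insert x (B \ {f}) := by
      apply Set.Subset.antisymm
      · intro y hy
        rcases hB''insert hy with rfl | h
        · exact Set.mem_insert _ _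
        · refine Set.mem_insert_of_mem _ ⟨h, ?_⟩
          rintro rfl
          exact hfB'' hy
      · rintro y (rfl | ⟨hyB, hyf⟩)
        · exact hxB''
        · by_contra hyB''
          have : y ∈ B \ B'' := ⟨hyB, hyB''⟩
          rw [hf] at this
          exact hyf this
    -- weight computation
    have hBfin : B.Finite := hfin.subset hB.subset_ground
    have hB''fin : B''.Finite := hfin.subset hB''.subset_ground
    have hwB'' : baseWeight ω B'' = baseWeight ω B - ω f + ω x := by
      rw [baseWeight_eq_sum ω hB''fin, baseWeight_eq_sum ω hBfin]
      classical
      have hfs : hB''fin.toFinset = insert x (hBfin.toFinset.erase f) := by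
        ext y
        simp only [Set.Finite.mem_toFinset, Finset.mem_insert, Finset.mem_erase,
          hB''eq, Set.mem_insert_iff, Set.mem_diff, Set.mem_singleton_iff]
        tauto
      rw [hfs, Finset.sum_insert (by
        simp only [Finset.mem_erase, Set.Finite.mem_toFinset]
        rintro ⟨-, hxB'⟩
        exact hxB hxB'),
        Finset.sum_erase_eq_sub (by simpa using hfB)]
      ring
    have := hmin B'' hB''
    rw [hwB''] at this
    linarith
  · rintro ⟨hB, hspan⟩
    refine ⟨hB, fun B' hB' => ?_⟩
    classical
    have hBfin : B.Finite := hfin.subset hB.subset_ground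
    have hB'fin : B'.Finite := hfin.subset hB'.subset_ground
    -- count inequality
    have hcount : ∀ r : ℝ, {x ∈ B' | ω x ≤ r}.encard ≤ {x ∈ B | ω x ≤ r}.encard := by
      intro r
      refine encard_le_of_indep_subset_closure (hB'.indep.subset fun y hy => hy.1)
        (hB.indep.subset fun y hy => hy.1) ?_
      intro y hy
      have hyE : y ∈ M.E := hB'.subset_ground hy.1
      have := hspan y hyE
      refine M.closure_subset_closure ?_ this
      intro z hz
      exact ⟨hz.1, hz.2.trans hy.2⟩
    -- translate to multisets
    rw [baseWeight_eq_sum ω hBfin, baseWeight_eq_sum ω hB'fin,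
      Finset.sum_eq_multiset_sum, Finset.sum_eq_multiset_sum]
    set s := Multiset.map ω hBfin.toFinset.val with hsdef
    set t := Multiset.map ω hB'fin.toFinset.val with htdef
    have hcards : s.card = t.card := by
      rw [hsdef, htdef, Multiset.card_map, Multiset.card_map]
      have h1 : (hBfin.toFinset.val.card : ℕ∞) = B.encard := by
        rw [hBfin.encard_eq_coe_toFinset_card]
        rfl
      have h2 : (hB'fin.toFinset.val.card : ℕ∞) = B'.encard := by
        rw [hB'fin.encard_eq_coe_toFinset_card]
        rfl
      have := hB.encard_eq_encard_of_isBase hB'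
      rw [← h1, ← h2] at this
      exact_mod_cast this
    have hfiltercard : ∀ (S : Set α) (hS : S.Finite) (r : ℝ),
        ((Multiset.map ω hS.toFinset.val).filter (fun x => x ≤ r)).card
          = {x ∈ S | ω x ≤ r}.encard := by
      intro S hS r
      rw [Multiset.filter_map, Multiset.card_map]
      have : Multiset.filter ((fun x => x ≤ r) ∘ ω) hS.toFinset.val
          = (hS.toFinset.filter (fun x => ω x ≤ r)).val := rfl
      rw [this]
      have hfin2 : {x ∈ S | ω x ≤ r}.Finite := hS.subset fun x hx => hx.1
      rw [hfin2.encard_eq_coe_toFinset_card]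
      congr 1
      have : hfin2.toFinset = hS.toFinset.filter (fun x => ω x ≤ r) := by
        ext y
        simp only [Set.Finite.mem_toFinset, Finset.mem_filter, Set.mem_setOf_eq]
      rw [this]
      rfl
    refine multiset_sum_le_of_counts s.card s t rfl hcards.symm fun r => ?_
    have h1 := hfiltercard B hBfin r
    have h2 := hfiltercard B' hB'fin r
    have := hcount r
    rw [← h1, ← h2] at this
    exact_mod_cast this

/-- If two weight functions `ω` and `ω'` induce the same flag on the ground set of `M`
(equivalently, they compare elements of the ground set in the same way), then they have
the same minimum-weight bases: `M_ω` depends only on the flag of `ω`. -/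
theorem isMinBase_congr_of_same_flag {α : Type*} (M : Matroid α) (hfin : M.E.Finite)
    (ω ω' : α → ℝ)
    (hord : ∀ x ∈ M.E, ∀ y ∈ M.E, ω x ≤ ω y ↔ ω' x ≤ ω' y)
    (B : Set α) :
    IsMinBase M ω B ↔ IsMinBase M ω' B := by
  rw [isMinBase_iff_closure M hfin ω B, isMinBase_iff_closure M hfin ω' B]
  refine and_congr_right fun hB => ?_
  refine forall₂_congr fun x hx => ?_
  have hset : {y ∈ B | ω y ≤ ω x} = {y ∈ B | ω' y ≤ ω' x} := by
    ext y
    simp only [Set.mem_setOf_eq]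
    exact and_congr_right fun hy => hord y (hB.subset_ground hy) x hx
  rw [hset]
end

section
/- Let M be a matroid on a finite ground set E and let ω be a weight function with flag ∅ = F_0 ⊂ F_1 ⊂ ⋯ ⊂ F_{k+1} = E. Then a base B of M is an ω-minimum base if and only if for every i with 1 ≤ i ≤ k+1, the set B ∩ (F_i ∖ F_{i−1}) is a base of the minor (M ↾ F_i) ／ F_{i−1} (the restriction of M to F_i, contracted by F_{i−1}). In other words, the matroid of ω-minimum bases is the direct sum of the minors (M ↾ F_i) ／ F_{i−1}. -/
open Matroid

/-- The contraction `M ／ C` of the set `C` in the matroid `M`, defined as the dual of the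
restriction of the dual of `M` to the complement of `C`. -/
noncomputable def Matroid.contract' {α : Type*} (M : Matroid α) (C : Set α) : Matroid α :=
  (M✶ ↾ (M.E \ C))✶


open Set

namespace MinBaseAux

variable {α : Type*}

lemma abel_sum (f g : ℕ → ℝ) (n : ℕ) :
    ∑ i ∈ Finset.range n, f i * (g (i+1) - g i)
      = f n * g n - f 0 * g 0 - ∑ i ∈ Finset.range n, (f (i+1) - f i) * g (i+1) := by
  induction n with
  | zero => simp
  | succ n ih => rw [Finset.sum_range_succ, Finset.sum_range_succ, ih]; ring

lemma baseWeight_empty (ω : α → ℝ) : baseWeight ω (∅ : Set α) = 0 := by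
  simp [baseWeight]

lemma baseWeight_union {ω : α → ℝ} {s t : Set α} (hst : Disjoint s t) (hs : s.Finite)
    (ht : t.Finite) : baseWeight ω (s ∪ t) = baseWeight ω s + baseWeight ω t :=
  finsum_mem_union hst hs ht

lemma baseWeight_const {ω : α → ℝ} {s : Set α} (hs : s.Finite) {c : ℝ}
    (h : ∀ x ∈ s, ω x = c) : baseWeight ω s = s.ncard * c := by
  rw [baseWeight, finsum_mem_eq_finite_toFinset_sum _ hs,
    Finset.sum_congr rfl (fun x hx => h x (hs.mem_toFinset.mp hx)), Finset.sum_const,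
    Set.ncard_eq_toFinset_card _ hs, nsmul_eq_mul]

lemma dual_basis_diff_of_base {N : Matroid α} {C J X : Set α}
    (hC : C ⊆ N.E) (hJ : N.IsBasis J C) (hX : X ⊆ N.E \ C)
    (hXJ : N.IsBase (X ∪ J)) : N✶.IsBasis ((N.E \ C) \ X) (N.E \ C) := by
  set D := N.E \ C with hD
  have hJC : J ⊆ C := hJ.subset
  have hdisj : Disjoint (D \ X) (X ∪ J) := by
    refine disjoint_union_right.mpr ⟨disjoint_sdiff_left, ?_⟩
    exact Disjoint.mono diff_subset hJC disjoint_sdiff_left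
  have hind : N✶.Indep (D \ X) :=
    (dual_indep_iff_exists (diff_subset.trans diff_subset)).mpr ⟨_, hXJ, hdisj⟩
  refine hind.isBasis_of_forall_insert diff_subset (fun e he => ?_)
  obtain ⟨heD, heX⟩ : e ∈ D ∧ e ∈ X := by
    rcases he with ⟨h1, h2⟩
    exact ⟨h1, by_contra fun h => h2 ⟨h1, h⟩⟩
  have heE : e ∈ N.E := heD.1
  rw [Matroid.Dep, dual_ground]
  refine ⟨fun hins => ?_, insert_subset heE (diff_subset.trans diff_subset)⟩
  obtain ⟨B₁, hB₁, hdj⟩ := (dual_indep_iff_exists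
    (insert_subset heE (diff_subset.trans diff_subset))).mp hins
  have heJ : e ∉ J := fun h => heD.2 (hJC h)
  have key1 : B₁ ⊆ (X \ {e}) ∪ C := by
    intro x hx
    have hxE := hB₁.subset_ground hx
    by_cases hxC : x ∈ C
    · exact Or.inr hxC
    · have hxD : x ∈ D := ⟨hxE, hxC⟩
      have hxni : x ∉ insert e (D \ X) := fun hmem => hdj.ne_of_mem hmem hx rfl
      have hxX : x ∈ X := by_contra fun h => hxni (Or.inr ⟨hxD, h⟩)
      exact Or.inl ⟨hxX, fun h => hxni (Or.inl h)⟩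
  have key2 : N.closure ((X \ {e}) ∪ C) ⊆ N.closure ((X ∪ J) \ {e}) := by
    have h1 : N.closure ((X \ {e}) ∪ C) ⊆ N.closure ((X \ {e}) ∪ N.closure J) :=
      N.closure_subset_closure (union_subset_union_right _ hJ.subset_closure)
    rw [closure_union_closure_right_eq] at h1
    refine h1.trans (N.closure_subset_closure ?_)
    rintro x (⟨hx1, hx2⟩ | hx)
    · exact ⟨Or.inl hx1, hx2⟩
    · exact ⟨Or.inr hx, fun h => heJ (h ▸ hx)⟩
  have hecl : e ∉ N.closure ((X ∪ J) \ {e}) := by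
    have hI : N.Indep ((X ∪ J) \ {e}) := hXJ.indep.subset diff_subset
    rw [hI.notMem_closure_iff_of_notMem (by simp) heE]
    rw [Set.insert_diff_singleton, Set.insert_eq_self.mpr (show e ∈ X ∪ J from Or.inl heX)]
    exact hXJ.indep
  apply hecl
  have : e ∈ N.closure B₁ := hB₁.closure_eq ▸ heE
  exact key2 (N.closure_subset_closure key1 this)

lemma contract_base_iff {N : Matroid α} (hfin : N.E.Finite) {C J X : Set α}
    (hC : C ⊆ N.E) (hJ : N.IsBasis J C) (hX : X ⊆ N.E \ C) :
    (N.contract' C).IsBase X ↔ N.IsBase (X ∪ J) := by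
  set D := N.E \ C with hD
  have hDE : D ⊆ N.E := diff_subset
  have hcb : (N.contract' C).IsBase X ↔ N✶.IsBasis (D \ X) D := by
    rw [Matroid.contract', dual_isBase_iff', restrict_ground_eq, and_iff_left hX,
      isBase_restrict_iff (show D ⊆ N✶.E from hDE)]
  rw [hcb]
  constructor
  · intro hbasis
    obtain ⟨B₀, hB₀, hdj⟩ := (dual_indep_iff_exists
      (diff_subset.trans hDE)).mp hbasis.indep
    have hJE : J ⊆ N.E := hJ.indep.subset_ground
    have hXE : X ⊆ N.E := hX.trans hDE
    have hXJE : X ∪ J ⊆ N.E := union_subset hXE hJE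
    have hB₀sub : B₀ ⊆ X ∪ C := by
      intro x hx
      have hxE := hB₀.subset_ground hx
      by_cases hxC : x ∈ C
      · exact Or.inr hxC
      · have hxD : x ∈ D := ⟨hxE, hxC⟩
        have : x ∉ D \ X := fun hmem => hdj.ne_of_mem hmem hx rfl
        exact Or.inl (by_contra fun h => this ⟨hxD, h⟩)
    have hspan : N.E ⊆ N.closure (X ∪ J) := by
      have h1 : N.closure B₀ ⊆ N.closure (X ∪ C) := N.closure_subset_closure hB₀sub
      have h2 : N.closure (X ∪ C) ⊆ N.closure (X ∪ N.closure J) :=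
        N.closure_subset_closure (union_subset_union_right _ hJ.subset_closure)
      rw [closure_union_closure_right_eq] at h2
      rw [← hB₀.closure_eq]
      exact h1.trans h2
    have hsp : N.Spanning (X ∪ J) := (spanning_iff_ground_subset_closure hXJE).mpr hspan
    obtain ⟨B₂, hB₂, hB₂sub⟩ := hsp.exists_isBase_subset
    obtain ⟨B', hB', hJB'⟩ := hJ.indep.exists_isBase_superset
    have hB'C : B' ∩ C = J := by
      refine subset_antisymm ?_ (subset_inter hJB' hJ.subset)
      rintro x ⟨hxB', hxC⟩
      by_contra hxJ
      have hxcl : x ∈ N.closure J := hJ.subset_closure hxC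
      have hJsub : J ⊆ B' \ {x} := subset_diff_singleton hJB' hxJ
      have hxn : x ∉ N.closure (B' \ {x}) := by
        have hI : N.Indep (B' \ {x}) := hB'.indep.subset diff_subset
        rw [hI.notMem_closure_iff_of_notMem (by simp) (hC hxC)]
        rw [Set.insert_diff_singleton, Set.insert_eq_self.mpr hxB']
        exact hB'.indep
      exact hxn (N.closure_subset_closure hJsub hxcl)
    set X₀ := B' ∩ D with hX₀def
    have hX₀ : X₀ ⊆ D := inter_subset_right
    have hB'eq : B' = X₀ ∪ J := by
      refine subset_antisymm (fun x hx => ?_) ?_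
      · have hxE := hB'.subset_ground hx
        by_cases hxC : x ∈ C
        · exact Or.inr (hB'C ▸ ⟨hx, hxC⟩)
        · exact Or.inl ⟨hx, hxE, hxC⟩
      · exact union_subset inter_subset_left hJB'
    have hbasis₀ : N✶.IsBasis (D \ X₀) D :=
      dual_basis_diff_of_base hC hJ hX₀ (hB'eq ▸ hB')
    have hDfin : D.Finite := hfin.subset hDE
    have h1 : (D \ X).encard = (D \ X₀).encard := hbasis.encard_eq_encard hbasis₀
    have h2 : X.encard = X₀.encard := by
      have e1 := encard_diff_add_encard_of_subset hX
      have e2 := encard_diff_add_encard_of_subset hX₀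
      rw [h1] at e1
      have htop : (D \ X₀).encard ≠ ⊤ := (hDfin.subset diff_subset).encard_lt_top.ne
      exact WithTop.add_left_cancel htop (e1.trans e2.symm)
    have hdisjX : Disjoint X J := Disjoint.mono hX hJ.subset disjoint_sdiff_left
    have hdisjX₀ : Disjoint X₀ J := Disjoint.mono hX₀ hJ.subset disjoint_sdiff_left
    have h3 : (X ∪ J).encard = B'.encard := by
      rw [encard_union_eq hdisjX, h2, hB'eq, encard_union_eq hdisjX₀]
    have h4 : (X ∪ J).encard ≤ B₂.encard := by
      rw [h3, hB'.encard_eq_encard_of_isBase hB₂]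
    have hXJfin : (X ∪ J).Finite := hfin.subset hXJE
    have : B₂ = X ∪ J := hXJfin.eq_of_subset_of_encard_le' hB₂sub h4
    rwa [← this]
  · intro h
    exact dual_basis_diff_of_base hC hJ hX h

lemma step {M : Matroid α} {Fp Fc B : Set α} (hfin : M.E.Finite)
    (hpc : Fp ⊆ Fc) (hcE : Fc ⊆ M.E) (hBp : M.IsBasis (B ∩ Fp) Fp) :
    ((M ↾ Fc).contract' Fp).IsBase (B ∩ (Fc \ Fp)) ↔ M.IsBasis (B ∩ Fc) Fc := by
  have hfc : (M ↾ Fc).E.Finite := by rw [restrict_ground_eq]; exact hfin.subset hcE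
  have h1 : (M ↾ Fc).IsBasis (B ∩ Fp) Fp := (isBasis_restrict_iff hcE).mpr ⟨hBp, hpc⟩
  have h2 : B ∩ (Fc \ Fp) ⊆ (M ↾ Fc).E \ Fp := by
    rw [restrict_ground_eq]; exact inter_subset_right
  have hpc' : Fp ⊆ (M ↾ Fc).E := by rw [restrict_ground_eq]; exact hpc
  rw [contract_base_iff hfc hpc' h1 h2]
  have hu : (B ∩ (Fc \ Fp)) ∪ (B ∩ Fp) = B ∩ Fc := by
    rw [← inter_union_distrib_left, diff_union_of_subset hpc]
  rw [hu, isBase_restrict_iff hcE]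

end MinBaseAux

/-- Let `ω` be a weight function whose distinct values on the ground set `M.E` are
`a 0 < a 1 < ⋯ < a k`, and let `∅ = F 0 ⊂ F 1 ⊂ ⋯ ⊂ F (k+1) = M.E` be the flag of
sublevel sets of `ω`.  Then a base `B` of `M` is an ω-minimum base if and only if for
every `1 ≤ i ≤ k+1` the set `B ∩ (F i \ F (i-1))` is a base of the minor
`(M ↾ F i) ／ F (i-1)`; that is, the matroid of ω-minimum bases is the direct sum of
these minors. -/
theorem isMinBase_iff_base_of_minors {α : Type*} (M : Matroid α) (hfin : M.E.Finite)
    (ω : α → ℝ) (k : ℕ) (a : Fin (k + 1) → ℝ) (ha : StrictMono a)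
    (hvals : ω '' M.E = Set.range a)
    (F : ℕ → Set α) (hF0 : F 0 = ∅)
    (hFsub : ∀ i : Fin (k + 1), F (i + 1 : ℕ) = {x ∈ M.E | ω x ≤ a i})
    (B : Set α) (hB : M.IsBase B) :
    IsMinBase M ω B ↔
      ∀ i ∈ Finset.Icc 1 (k + 1),
        ((M ↾ F i).contract' (F (i - 1))).IsBase (B ∩ (F i \ F (i - 1))) := by
    classical
  have hFn : ∀ n (h : n < k + 1), F (n+1) = {x ∈ M.E | ω x ≤ a ⟨n, h⟩} := fun n h => by
    simpa using hFsub ⟨n, h⟩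
  have hFE : ∀ n, n ≤ k + 1 → F n ⊆ M.E := by
    intro n hn
    match n with
    | 0 => rw [hF0]; exact empty_subset _
    | (m+1) => rw [hFn m (by omega)]; exact sep_subset _ _
  have hval : ∀ x ∈ M.E, ∃ j : Fin (k+1), ω x = a j := by
    intro x hx
    have : ω x ∈ Set.range a := hvals ▸ Set.mem_image_of_mem ω hx
    obtain ⟨j, hj⟩ := this
    exact ⟨j, hj.symm⟩
  have hFtop : F (k+1) = M.E := by
    rw [hFn k (by omega)]
    refine subset_antisymm (sep_subset _ _) (fun x hx => ⟨hx, ?_⟩)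
    obtain ⟨j, hj⟩ := hval x hx
    rw [hj]
    exact ha.monotone (Fin.le_last j)
  have hstep : ∀ n, n ≤ k → F n ⊆ F (n+1) := by
    intro n hn
    match n with
    | 0 => rw [hF0]; exact empty_subset _
    | (m+1) =>
      rw [hFn m (by omega), hFn (m+1) (by omega)]
      rintro x ⟨hx1, hx2⟩
      exact ⟨hx1, hx2.trans (ha.monotone (Fin.mk_le_mk.mpr (Nat.le_succ m)))⟩
  have hchain : ∀ n m : ℕ, n ≤ m → m ≤ k+1 → F n ⊆ F m := by
    intro n m hnm hm
    induction m with
    | zero =>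
      have : n = 0 := by omega
      subst this; exact subset_rfl
    | succ p ih =>
      rcases Nat.lt_or_ge n (p+1) with h | h
      · exact (ih (by omega) (by omega)).trans (hstep p (by omega))
      · have : n = p+1 := by omega
        subst this; exact subset_rfl
  -- the extended value function
  set A : ℕ → ℝ := fun i => a ⟨min i k, Nat.lt_succ_of_le (min_le_right i k)⟩ with hAdef
  have hAeq : ∀ i (h : i ≤ k), A i = a ⟨i, Nat.lt_succ_of_le h⟩ := by
    intro i h
    simp only [hAdef]
    exact congrArg a (Fin.ext (by simpa using Nat.min_eq_left h))
  have hAk : A (k+1) = A k := by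
    simp only [hAdef]
    exact congrArg a (Fin.ext (by simp))
  have hApos : ∀ i, i < k → A i < A (i+1) := by
    intro i hik
    rw [hAeq i (by omega), hAeq (i+1) (by omega)]
    exact ha (Fin.mk_lt_mk.mpr (by omega))
  have hcnonneg : ∀ i, i ≤ k → 0 ≤ A (i+1) - A i := by
    intro i hi
    rcases Nat.lt_or_ge i k with h | h
    · have := hApos i h; linarith
    · have : i = k := by omega
      subst this; rw [hAk]; simp
  have hconst : ∀ n, n ≤ k → ∀ x ∈ F (n+1) \ F n, ω x = A n := by
    intro n hn x hx
    obtain ⟨hx1, hx2⟩ := hx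
    rw [hFn n (by omega)] at hx1
    obtain ⟨hxE, hxle⟩ := hx1
    obtain ⟨j, hj⟩ := hval x hxE
    have hji : (j : ℕ) ≤ n := by
      have h1 : a j ≤ a ⟨n, by omega⟩ := hj ▸ hxle
      exact ha.le_iff_le.mp h1
    rcases Nat.lt_or_ge (j : ℕ) n with hlt | hge
    · exfalso
      obtain ⟨m, rfl⟩ : ∃ m, n = m + 1 := ⟨n - 1, by omega⟩
      apply hx2
      rw [hFn m (by omega)]
      refine ⟨hxE, ?_⟩
      rw [hj]
      refine ha.monotone ?_
      rw [Fin.le_def]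
      simpa using (show (j : ℕ) ≤ m by omega)
    · have hjn : (j : ℕ) = n := by omega
      rw [hAeq n hn, hj]
      exact congrArg a (Fin.ext (by simpa using hjn))
  have hFfin : ∀ n, n ≤ k+1 → (F n).Finite := fun n hn => hfin.subset (hFE n hn)
  have hBfin : ∀ B', M.IsBase B' → B'.Finite := fun B' h => hfin.subset h.subset_ground
  -- a base whose restriction to every F j is a basis of F j
  have hkey : ∀ n, n ≤ k+1 → ∃ I, M.IsBasis I (F n) ∧ ∀ j, j ≤ n → M.IsBasis (I ∩ F j) (F j) := by
    intro n
    induction n with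
    | zero =>
      intro _
      have hb : M.IsBasis ∅ (F 0) := by rw [hF0]; exact M.isBasis_empty_iff.mpr rfl
      refine ⟨∅, hb, fun j hj => ?_⟩
      have : j = 0 := by omega
      subst this
      rw [Set.empty_inter]
      exact hb
    | succ m ih =>
      intro h
      obtain ⟨I, hI, hIj⟩ := ih (by omega)
      obtain ⟨Jn, hJn, hJnI⟩ := hI.exists_isBasis_inter_eq_of_superset (hstep m (by omega))
        (hFE (m+1) h)
      refine ⟨Jn, hJn, fun j hj => ?_⟩
      rcases Nat.lt_or_ge j (m+1) with hlt | hge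
      · have heq : Jn ∩ F j = I ∩ F j := by
          rw [← hJnI, Set.inter_assoc,
            Set.inter_eq_self_of_subset_right (hchain j m (by omega) (by omega))]
        rw [heq]
        exact hIj j (by omega)
      · have : j = m+1 := by omega
        subst this
        rw [Set.inter_eq_self_of_subset_left hJn.subset]
        exact hJn
  obtain ⟨Bs, hBsb, hBsj⟩ := hkey (k+1) le_rfl
  have hBs : M.IsBase Bs := by
    rw [← isBasis_ground_iff, ← hFtop]; exact hBsb
  -- cardinality comparisons
  have hle : ∀ B', M.IsBase B' → ∀ j, j ≤ k+1 → (B' ∩ F j).ncard ≤ (Bs ∩ F j).ncard := by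
    intro B' hB' j hj
    have hind : M.Indep (B' ∩ F j) := hB'.indep.subset Set.inter_subset_left
    obtain ⟨Jj, hJj, hsub⟩ := hind.subset_isBasis_of_subset Set.inter_subset_right (hFE j hj)
    have h1 : (B' ∩ F j).encard ≤ (Bs ∩ F j).encard := by
      calc (B' ∩ F j).encard ≤ Jj.encard := Set.encard_le_encard hsub
        _ = (Bs ∩ F j).encard := hJj.encard_eq_encard (hBsj j hj)
    have hfinj : (Bs ∩ F j).Finite := hfin.subset (Set.inter_subset_right.trans (hFE j hj))
    rw [Set.ncard_def, Set.ncard_def]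
    exact ENat.toNat_le_toNat h1 hfinj.encard_lt_top.ne
  have hPiff : ∀ j, j ≤ k+1 → (M.IsBasis (B ∩ F j) (F j) ↔ (B ∩ F j).ncard = (Bs ∩ F j).ncard) := by
    intro j hj
    constructor
    · intro hbasis
      rw [Set.ncard_def, Set.ncard_def, hbasis.encard_eq_encard (hBsj j hj)]
    · intro hcard
      have hind : M.Indep (B ∩ F j) := hB.indep.subset Set.inter_subset_left
      obtain ⟨Jj, hJj, hsub⟩ := hind.subset_isBasis_of_subset Set.inter_subset_right (hFE j hj)
      have hJfin : Jj.Finite := hfin.subset (hJj.subset.trans (hFE j hj))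
      have hJcard : Jj.ncard = (Bs ∩ F j).ncard := by
        rw [Set.ncard_def, Set.ncard_def, hJj.encard_eq_encard (hBsj j hj)]
      have heq : B ∩ F j = Jj :=
        Set.eq_of_subset_of_ncard_le hsub (le_of_eq (hJcard.trans hcard.symm)) hJfin
      rw [heq]
      exact hJj
  -- the weight formula
  have hW : ∀ S : Set α, S.Finite → ∀ n, n ≤ k+1 →
      baseWeight ω (S ∩ F n)
        = ∑ i ∈ Finset.range n, A i * (((S ∩ F (i+1)).ncard : ℝ) - ((S ∩ F i).ncard : ℝ)) := by
    intro S hS n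
    induction n with
    | zero =>
      intro _
      rw [hF0, Set.inter_empty]
      simp [MinBaseAux.baseWeight_empty]
    | succ m ih =>
      intro h
      have hm : m ≤ k := by omega
      have hsplit : S ∩ F (m+1) = (S ∩ F m) ∪ (S ∩ (F (m+1) \ F m)) := by
        rw [← Set.inter_union_distrib_left, Set.union_diff_cancel (hstep m hm)]
      have hd : Disjoint (S ∩ F m) (S ∩ (F (m+1) \ F m)) :=
        Disjoint.mono Set.inter_subset_right Set.inter_subset_right disjoint_sdiff_right
      have hf1 : (S ∩ F m).Finite := hS.subset Set.inter_subset_left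
      have hf2 : (S ∩ (F (m+1) \ F m)).Finite := hS.subset Set.inter_subset_left
      have hcard : (S ∩ F (m+1)).ncard = (S ∩ F m).ncard + (S ∩ (F (m+1) \ F m)).ncard := by
        rw [hsplit, Set.ncard_union_eq hd hf1 hf2]
      rw [hsplit, MinBaseAux.baseWeight_union hd hf1 hf2,
        MinBaseAux.baseWeight_const hf2 (fun x hx => hconst m hm x hx.2),
        ih (by omega), Finset.sum_range_succ]
      have harith : ((S ∩ (F (m+1) \ F m)).ncard : ℝ) * A m
          = A m * (((S ∩ F (m+1)).ncard : ℝ) - ((S ∩ F m).ncard : ℝ)) := by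
        rw [hcard]
        push_cast
        ring
      rw [harith]
  -- expansion of base weights via Abel summation
  have hexp : ∀ B', M.IsBase B' → baseWeight ω B'
      = A (k+1) * ((B' ∩ F (k+1)).ncard : ℝ)
        - ∑ i ∈ Finset.range (k+1), (A (i+1) - A i) * ((B' ∩ F (i+1)).ncard : ℝ) := by
    intro B' hB'
    have h0 : B' ∩ F (k+1) = B' :=
      Set.inter_eq_self_of_subset_left (by rw [hFtop]; exact hB'.subset_ground)
    conv_lhs => rw [← h0]
    rw [hW B' (hBfin B' hB') (k+1) le_rfl,
      MinBaseAux.abel_sum (fun i => A i) (fun i => ((B' ∩ F i).ncard : ℝ)) (k+1)]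
    rw [hF0]
    simp
  have hWdiff : ∀ B', M.IsBase B' → baseWeight ω B - baseWeight ω B'
      = ∑ i ∈ Finset.range (k+1),
          (A (i+1) - A i) * (((B' ∩ F (i+1)).ncard : ℝ) - ((B ∩ F (i+1)).ncard : ℝ)) := by
    intro B' hB'
    have htop : ((B' ∩ F (k+1)).ncard : ℝ) = ((B ∩ F (k+1)).ncard : ℝ) := by
      rw [hFtop, Set.inter_eq_self_of_subset_left hB'.subset_ground,
        Set.inter_eq_self_of_subset_left hB.subset_ground]
      exact_mod_cast hB'.ncard_eq_ncard_of_isBase hB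
    rw [hexp B hB, hexp B' hB', htop]
    simp only [mul_sub]
    rw [Finset.sum_sub_distrib]
    ring
  -- characterization of minimality via restricted bases
  have hMinIff : IsMinBase M ω B ↔ ∀ j, j ≤ k+1 → M.IsBasis (B ∩ F j) (F j) := by
    constructor
    · rintro ⟨-, hmin⟩ j hj
      match j, hj with
      | 0, _ =>
        rw [hF0, Set.inter_empty]
        exact M.isBasis_empty_iff.mpr rfl
      | (m+1), hj =>
        rcases Nat.lt_or_ge m k with hmk | hmk
        · have hsle : baseWeight ω B - baseWeight ω Bs ≤ 0 := by
            have := hmin Bs hBs; linarith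
          rw [hWdiff Bs hBs] at hsle
          have hterm : ∀ i ∈ Finset.range (k+1),
              0 ≤ (A (i+1) - A i) * (((Bs ∩ F (i+1)).ncard : ℝ) - ((B ∩ F (i+1)).ncard : ℝ)) := by
            intro i hi
            rw [Finset.mem_range] at hi
            have h1 : 0 ≤ A (i+1) - A i := hcnonneg i (by omega)
            have h2 : ((B ∩ F (i+1)).ncard : ℝ) ≤ ((Bs ∩ F (i+1)).ncard : ℝ) := by
              exact_mod_cast hle B hB (i+1) (by omega)
            exact mul_nonneg h1 (by linarith)
          have hsum0 : ∑ i ∈ Finset.range (k+1),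
              (A (i+1) - A i) * (((Bs ∩ F (i+1)).ncard : ℝ) - ((B ∩ F (i+1)).ncard : ℝ)) = 0 :=
            le_antisymm hsle (Finset.sum_nonneg hterm)
          have hzero := (Finset.sum_eq_zero_iff_of_nonneg hterm).mp hsum0 m
            (Finset.mem_range.mpr (by omega))
          have hA' : 0 < A (m+1) - A m := by
            have := hApos m hmk; linarith
          have hcard : ((B ∩ F (m+1)).ncard : ℝ) = ((Bs ∩ F (m+1)).ncard : ℝ) := by
            rcases mul_eq_zero.mp hzero with h | h
            · exfalso; linarith
            · linarith
          rw [hPiff (m+1) hj]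
          exact_mod_cast hcard
        · have hmeq : m + 1 = k + 1 := by omega
          rw [hmeq, hFtop, Set.inter_eq_self_of_subset_left hB.subset_ground, isBasis_ground_iff]
          exact hB
    · intro hP
      refine ⟨hB, fun B' hB' => ?_⟩
      have hd := hWdiff B' hB'
      have hterm : ∀ i ∈ Finset.range (k+1),
          (A (i+1) - A i) * (((B' ∩ F (i+1)).ncard : ℝ) - ((B ∩ F (i+1)).ncard : ℝ)) ≤ 0 := by
        intro i hi
        rw [Finset.mem_range] at hi
        rcases Nat.lt_or_ge i k with hik | hik
        · have h1 : 0 ≤ A (i+1) - A i := hcnonneg i (by omega)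
          have h2 : ((B' ∩ F (i+1)).ncard : ℝ) ≤ ((B ∩ F (i+1)).ncard : ℝ) := by
            have hbb := (hPiff (i+1) (by omega)).mp (hP (i+1) (by omega))
            have hleB' := hle B' hB' (i+1) (by omega)
            exact_mod_cast hbb ▸ hleB'
          exact mul_nonpos_of_nonneg_of_nonpos h1 (by linarith)
        · have : i = k := by omega
          subst this
          rw [hAk]
          simp
      have hle0 : baseWeight ω B - baseWeight ω B' ≤ 0 := hd ▸ Finset.sum_nonpos hterm
      linarith
  -- final assembly
  rw [hMinIff]
  constructor
  · intro hP i hi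
    rw [Finset.mem_Icc] at hi
    obtain ⟨m, rfl⟩ : ∃ m, i = m + 1 := ⟨i - 1, by omega⟩
    simp only [Nat.add_sub_cancel]
    exact (MinBaseAux.step hfin (hstep m (by omega)) (hFE (m+1) (by omega))
      (hP m (by omega))).mpr (hP (m+1) (by omega))
  · intro hcon j
    induction j with
    | zero =>
      intro _
      rw [hF0, Set.inter_empty]
      exact M.isBasis_empty_iff.mpr rfl
    | succ m ih =>
      intro hj
      have h1 := hcon (m+1) (Finset.mem_Icc.mpr ⟨by omega, hj⟩)
      simp only [Nat.add_sub_cancel] at h1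
      exact (MinBaseAux.step hfin (hstep m (by omega)) (hFE (m+1) hj) (ih (by omega))).mp h1
end

section
/- Let M be a matroid on a finite ground set E, let ω be a weight function, let c ∈ ℝ, and set F = {x ∈ E : ω(x) ≤ c}. If e is an element of the closure of F in M that does not lie in F, then no ω-minimum base of M contains e. -/
open Matroid

/-!
If `e` belongs to a minimum base `B`, then `e ∉ cl(B - e)`. Since `e ∈ cl(F)`, some `f ∈ F` also
lies outside `cl(B - e)`, so `B - e + f` is again a base. Its weight exceeds that of `B` by
`ω f - ω e ≤ c - ω e < 0`, contradicting minimality.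
-/

lemma baseWeight_insert {α : Type*} (ω : α → ℝ) {X : Set α} {f : α} (hX : X.Finite)
    (hf : f ∉ X) : baseWeight ω (insert f X) = ω f + baseWeight ω X :=
  finsum_mem_insert ω hf hX

namespace Matroid

variable {α : Type*} {M : Matroid α} {X Y : Set α} {e f : α}

lemma exists_mem_notMem_closure_of_mem_closure (he : e ∈ M.closure X) (heY : e ∉ M.closure Y) :
    ∃ f ∈ X, f ∉ M.closure Y := by
  by_contra! hXY
  exact heY (M.closure_subset_closure_of_subset_closure hXY he)

end Matroid

lemma IsMinBase.le_of_notMem_closure_diff_singleton {α : Type*} {M : Matroid α} {ω : α → ℝ}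
    {B : Set α} {e f : α} (hB : IsMinBase M ω B) (hBfin : B.Finite) (he : e ∈ B)
    (hf : f ∉ M.closure (B \ {e})) (hfE : f ∈ M.E) : ω e ≤ ω f := by
  have hexch : M.IsBase (insert f (B \ {e})) := hB.1.exchange_base_of_notMem_closure he hf
  have hfB : f ∉ B \ {e} := fun h ↦ hf (M.mem_closure_of_mem' h hfE)
  have hdiff : (B \ {e}).Finite := hBfin.sdiff
  have hwB : baseWeight ω B = ω e + baseWeight ω (B \ {e}) := by
    conv_lhs => rw [← Set.insert_sdiff_self_of_mem he]
    exact baseWeight_insert ω hdiff (by simp)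
  have hmin := hB.2 _ hexch
  rwa [hwB, baseWeight_insert ω hdiff hfB, add_le_add_iff_right] at hmin

/-- Let `F = {x ∈ M.E | ω x ≤ c}` be a sublevel set of the weight function `ω`.  If `e`
lies in the closure of `F` in `M` but not in `F`, then no ω-minimum base of `M`
contains `e`. -/
theorem not_mem_minBase_of_mem_closure_sublevel {α : Type*} (M : Matroid α)
    (hfin : M.E.Finite) (ω : α → ℝ) (c : ℝ) (e : α)
    (he : e ∈ M.closure {x ∈ M.E | ω x ≤ c}) (heF : e ∉ {x ∈ M.E | ω x ≤ c}) :
    ∀ B : Set α, IsMinBase M ω B → e ∉ B := by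
  intro B hB heB
  have hce : c < ω e := lt_of_not_ge fun h ↦ heF ⟨M.closure_subset_ground _ he, h⟩
  obtain ⟨f, ⟨hfE, hfc⟩, hf⟩ :=
    exists_mem_notMem_closure_of_mem_closure he (hB.1.indep.notMem_closure_sdiff_of_mem heB)
  have hef := hB.le_of_notMem_closure_diff_singleton (hfin.subset hB.1.subset_ground) heB hf hfE
  linarith
end

section
/- Let M be a matroid of rank r on a finite ground set E. Let ∅ = F_0 ⊂ F_1 ⊂ ⋯ ⊂ F_r = E be a maximal flag of flats of M (each F_j a flat of rank j), fix i with 1 ≤ i ≤ r−1, and let F_i′ ≠ F_i be another flat of M of rank i with F_{i−1} ⊂ F_i′ ⊂ F_{i+1}; let F′ be the maximal flag of flats obtained from F by replacing F_i with F_i′. For a maximal flag of flats G, write B_G for the family of bases B of M satisfying |B ∩ (G_j ∖ G_{j−1})| = 1 for all j with 1 ≤ j ≤ r. Then the following are equivalent: (i) B_F = B_{F′}; (ii) B_F equals the family of bases B of M with |B ∩ (F_j ∖ F_{j−1})| = 1 for all j ∉ {i, i+1} and |B ∩ (F_{i+1} ∖ F_{i−1})| = 2; (iii) F_i ∪ F_i′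 = F_{i+1}; (iv) F_i and F_i′ are the only flats G of M with F_{i−1} ⊊ G ⊊ F_{i+1}. -/
open Matroid

/-- For a maximal flag of flats `G 0 ⊂ G 1 ⊂ ⋯ ⊂ G r` of a rank-`r` matroid `M`,
`flagBases M r G` is the family of bases `B` of `M` with `|B ∩ (G j \ G (j-1))| = 1`
for all `1 ≤ j ≤ r`: the minimum bases of any weight vector whose flag is `G`. -/
def flagBases {α : Type*} (M : Matroid α) (r : ℕ) (G : ℕ → Set α) : Set (Set α) :=
  {B | M.IsBase B ∧ ∀ j ∈ Finset.Icc 1 r, (B ∩ (G j \ G (j - 1))).ncard = 1}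

namespace MyAux
open Set


variable {α : Type*} {M : Matroid α} {X Y I J F F₁ F₂ : Set α}

lemma flat_closure (M : Matroid α) (X : Set α) : M.IsFlat (M.closure X) := by
  refine ⟨fun I Y hIc hIY => ?_, M.closure_subset_ground X⟩
  have h1 : Y ⊆ M.closure I := hIY.subset_closure
  have h2 : M.closure I = M.closure (M.closure X) := hIc.closure_eq_closure
  rw [h2, M.closure_closure] at h1
  exact h1

lemma flat_inter (h₁ : M.IsFlat F₁) (h₂ : M.IsFlat F₂) : M.IsFlat (F₁ ∩ F₂) := by
  have hsub : F₁ ∩ F₂ ⊆ M.E := inter_subset_left.trans h₁.subset_ground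
  have h : M.closure (F₁ ∩ F₂) = F₁ ∩ F₂ := by
    refine subset_antisymm ?_ (M.subset_closure _ hsub)
    refine subset_inter ?_ ?_
    · exact (M.closure_subset_closure inter_subset_left).trans h₁.closure.subset
    · exact (M.closure_subset_closure inter_subset_right).trans h₂.closure.subset
  exact h ▸ flat_closure M (F₁ ∩ F₂)

section Rank
variable (hfin : M.E.Finite)
include hfin

lemma indep_finite (hI : M.Indep I) : I.Finite := hfin.subset hI.subset_ground

lemma matRank_basis (hI : M.IsBasis I X) (hX : X ⊆ M.E) : matRank M X = I.ncard := by
  have hub : ∀ n ∈ {n : ℕ | ∃ J, M.Indep J ∧ J ⊆ X ∧ J.ncard = n}, n ≤ I.ncard := by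
    rintro n ⟨J, hJ, hJX, rfl⟩
    obtain ⟨J', hJ', hJJ'⟩ := hJ.subset_isBasis_of_subset hJX hX
    have h1 : J.ncard ≤ J'.ncard :=
      Set.ncard_le_ncard hJJ' (indep_finite hfin hJ'.indep)
    have h2 : J'.ncard = I.ncard :=
      (hJ'.isBase_restrict).ncard_eq_ncard_of_isBase (hI.isBase_restrict)
    omega
  have hmem : I.ncard ∈ {n : ℕ | ∃ J, M.Indep J ∧ J ⊆ X ∧ J.ncard = n} :=
    ⟨I, hI.indep, hI.subset, rfl⟩
  exact le_antisymm (csSup_le ⟨_, hmem⟩ hub) (le_csSup ⟨I.ncard, hub⟩ hmem)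

lemma indep_ncard_le_matRank (hJ : M.Indep J) (hJX : J ⊆ X) (hX : X ⊆ M.E) :
    J.ncard ≤ matRank M X := by
  obtain ⟨I, hI⟩ := M.exists_isBasis X hX
  rw [matRank_basis hfin hI hX]
  obtain ⟨J', hJ', hJJ'⟩ := hJ.subset_isBasis_of_subset hJX hX
  have h1 : J.ncard ≤ J'.ncard := Set.ncard_le_ncard hJJ' (indep_finite hfin hJ'.indep)
  have h2 : J'.ncard = I.ncard :=
    (hJ'.isBase_restrict).ncard_eq_ncard_of_isBase (hI.isBase_restrict)
  omega

lemma matRank_mono (hXY : X ⊆ Y) (hY : Y ⊆ M.E) : matRank M X ≤ matRank M Y := by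
  obtain ⟨I, hI⟩ := M.exists_isBasis X ((hXY.trans hY))
  rw [matRank_basis hfin hI (hXY.trans hY)]
  exact indep_ncard_le_matRank hfin hI.indep (hI.subset.trans hXY) hY

lemma basis_of_indep_ncard (hI : M.Indep I) (hIX : I ⊆ X) (hX : X ⊆ M.E)
    (hcard : matRank M X ≤ I.ncard) : M.IsBasis I X := by
  obtain ⟨J, hJ, hIJ⟩ := hI.subset_isBasis_of_subset hIX hX
  have h2 : matRank M X = J.ncard := matRank_basis hfin hJ hX
  have : I = J := Set.eq_of_subset_of_ncard_le hIJ (by omega) (indep_finite hfin hJ.indep)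
  exact this ▸ hJ

lemma flat_eq_of_subset_rank (h₁ : M.IsFlat F₁) (h₂ : M.IsFlat F₂) (hss : F₁ ⊆ F₂)
    (hr : matRank M F₂ ≤ matRank M F₁) : F₁ = F₂ := by
  obtain ⟨I, hI⟩ := M.exists_isBasis F₁ h₁.subset_ground
  have hI2 : M.IsBasis I F₂ := by
    refine basis_of_indep_ncard hfin hI.indep (hI.subset.trans hss) h₂.subset_ground ?_
    rw [← matRank_basis hfin hI h₁.subset_ground]; exact hr
  refine subset_antisymm hss ?_
  have := hI2.subset_closure
  rwa [hI.closure_eq_closure, h₁.closure] at this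


end Rank


variable {α : Type*} {M : Matroid α} {X Y B I J K : Set α}

/-- counting step -/
lemma hsum (hB : B.Finite) (h : X ⊆ Y) :
    (B ∩ X).ncard + (B ∩ (Y \ X)).ncard = (B ∩ Y).ncard := by
  rw [← Set.ncard_union_eq ?_ (hB.inter_of_left X) (hB.inter_of_left _)]
  · congr 1
    ext x; constructor
    · rintro (⟨h1, h2⟩ | ⟨h1, h2⟩)
      · exact ⟨h1, h h2⟩
      · exact ⟨h1, h2.1⟩
    · rintro ⟨h1, h2⟩
      by_cases hx : x ∈ X
      · exact Or.inl ⟨h1, hx⟩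
      · exact Or.inr ⟨h1, h2, hx⟩
  · exact Set.disjoint_left.mpr (by rintro x ⟨-, h1⟩ ⟨-, -, h2⟩; exact h2 h1)

variable {r : ℕ} {G : ℕ → Set α}

lemma chain_mono (hmono : ∀ j < r, G j ⊆ G (j + 1)) :
    ∀ ⦃j k⦄, j ≤ k → k ≤ r → G j ⊆ G k := by
  intro j k hjk hkr
  induction k with
  | zero => simp [Nat.le_zero.mp hjk]
  | succ n ih =>
    rcases Nat.lt_or_ge j (n+1) with h | h
    · exact (ih (by omega) (by omega)).trans (hmono n (by omega))
    · have : j = n + 1 := by omega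
      simp [this]

lemma flagBases_eq (hfin : M.E.Finite) (hG0 : G 0 = ∅)
    (hmono : ∀ j < r, G j ⊆ G (j + 1)) :
    flagBases M r G = {B | M.IsBase B ∧ ∀ j ≤ r, (B ∩ G j).ncard = j} := by
  ext B
  simp only [flagBases, Set.mem_setOf_eq, Finset.mem_Icc]
  constructor
  · rintro ⟨hB, hsteps⟩
    refine ⟨hB, ?_⟩
    have hBfin : B.Finite := hfin.subset hB.subset_ground
    intro j hj
    induction j with
    | zero => simp [hG0]
    | succ n ih =>
      have h1 := hsum hBfin (hmono n (by omega))
      have h2 := hsteps (n+1) ⟨by omega, hj⟩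
      simp only [Nat.add_sub_cancel] at h2
      rw [ih (by omega)] at h1
      omega
  · rintro ⟨hB, hcum⟩
    refine ⟨hB, ?_⟩
    have hBfin : B.Finite := hfin.subset hB.subset_ground
    rintro j ⟨hj1, hjr⟩
    obtain ⟨n, rfl⟩ := Nat.exists_eq_add_of_le hj1
    have h1 := hsum hBfin (hmono (1 + n - 1) (by omega))
    have e : 1 + n - 1 + 1 = 1 + n := by omega
    rw [e] at h1
    rw [hcum (1+n) hjr, hcum (1+n-1) (by omega)] at h1
    omega


section Ext
variable {α : Type*} {M : Matroid α} {r : ℕ} {G : ℕ → Set α} {K : Set α}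
variable (hfin : M.E.Finite)
include hfin

lemma ext_step (hG : ∀ j ≤ r, M.IsFlat (G j) ∧ matRank M (G j) = j)
    (hmono : ∀ j < r, G j ⊆ G (j + 1)) {m : ℕ} (hm : m < r)
    (hK : M.IsBasis K (G m)) :
    ∃ K', M.IsBasis K' (G (m + 1)) ∧ K' ∩ G m = K := by
  have hsubE : G (m+1) ⊆ M.E := (hG (m+1) hm).1.subset_ground
  obtain ⟨K', hK', hKK'⟩ := hK.indep.subset_isBasis_of_subset
    (hK.subset.trans (hmono m hm)) hsubE
  refine ⟨K', hK', ?_⟩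
  have h1 : K ⊆ K' ∩ G m := subset_inter hKK' hK.subset
  have h2 : (K' ∩ G m).ncard ≤ K.ncard := by
    have hb : (K' ∩ G m).ncard ≤ matRank M (G m) :=
      indep_ncard_le_matRank hfin (hK'.indep.subset inter_subset_left)
        inter_subset_right ((hG m (le_of_lt hm)).1.subset_ground)
    have hc : matRank M (G m) = K.ncard :=
      matRank_basis hfin hK ((hG m (le_of_lt hm)).1.subset_ground)
    omega
  exact (Set.eq_of_subset_of_ncard_le h1 h2
    ((indep_finite hfin hK'.indep).inter_of_left _)).symm

lemma exists_base_ext (hG : ∀ j ≤ r, M.IsFlat (G j) ∧ matRank M (G j) = j)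
    (hmono : ∀ j < r, G j ⊆ G (j + 1)) (hGr : G r = M.E) :
    ∀ d m, m + d = r → ∀ K, M.IsBasis K (G m) →
      ∃ B, M.IsBase B ∧ B ∩ G m = K ∧ ∀ j, m ≤ j → j ≤ r → (B ∩ G j).ncard = j := by
  intro d
  induction d with
  | zero =>
    intro m hm K hK
    subst hm
    simp only [Nat.add_zero] at *
    refine ⟨K, ?_, ?_, ?_⟩
    · rw [← Matroid.isBasis_ground_iff, ← hGr]; exact hK
    · exact inter_eq_self_of_subset_left hK.subset
    · intro j h1 h2
      have : j = m := le_antisymm h2 h1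
      subst this
      rw [inter_eq_self_of_subset_left hK.subset,
        ← matRank_basis hfin hK (hGr ▸ Subset.rfl), (hG j le_rfl).2]
  | succ n ih =>
    intro m hm K hK
    have hmr : m < r := by omega
    obtain ⟨K', hK', hK'm⟩ := ext_step hfin hG hmono hmr hK
    obtain ⟨B, hB, hBm1, hBcounts⟩ := ih (m+1) (by omega) K' hK'
    refine ⟨B, hB, ?_, ?_⟩
    · rw [← hK'm, ← hBm1]
      rw [inter_assoc]
      rw [inter_eq_self_of_subset_right (hmono m hmr)]
    · intro j h1 h2
      rcases Nat.lt_or_ge m j with h | h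
      · exact hBcounts j (by omega) h2
      · have : j = m := by omega
        subst this
        have : B ∩ G j = K := by
          rw [← hK'm, ← hBm1, inter_assoc,
            inter_eq_self_of_subset_right (hmono j hmr)]
        rw [this, ← matRank_basis hfin hK ((hG j (le_of_lt hmr)).1.subset_ground),
          (hG j (le_of_lt hmr)).2]

lemma exists_basis_counts (hG : ∀ j ≤ r, M.IsFlat (G j) ∧ matRank M (G j) = j)
    (hmono : ∀ j < r, G j ⊆ G (j + 1)) (hG0 : G 0 = ∅) :
    ∀ m, m ≤ r → ∃ K, M.IsBasis K (G m) ∧ ∀ j ≤ m, (K ∩ G j).ncard = j := by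
  intro m
  induction m with
  | zero =>
    intro _
    refine ⟨∅, ?_, ?_⟩
    · rw [hG0]; simpa using M.empty_indep.isBasis_closure.isBasis_subset (by simp)
        (M.subset_closure ∅ (by simp))
    · intro j hj; simp [Nat.le_zero.mp hj]
  | succ n ih =>
    intro hm
    obtain ⟨K, hK, hKc⟩ := ih (by omega)
    obtain ⟨K', hK', hK'm⟩ := ext_step hfin hG hmono (by omega) hK
    refine ⟨K', hK', ?_⟩
    intro j hj
    rcases Nat.lt_or_ge j (n+1) with h | h
    · have : K' ∩ G j = K ∩ G j := by
        rw [← hK'm, inter_assoc, inter_eq_self_of_subset_right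
          (chain_mono hmono (by omega) (by omega))]
      rw [this]; exact hKc j (by omega)
    · have : j = n + 1 := by omega
      subst this
      rw [inter_eq_self_of_subset_left hK'.subset,
        ← matRank_basis hfin hK' ((hG (n+1) hm).1.subset_ground), (hG (n+1) hm).2]

end Ext

section Meet
variable {α : Type*} {M : Matroid α}

lemma flats_meet (hfin : M.E.Finite) {i : ℕ} (hi : 1 ≤ i) {F₀ G₁ G₂ : Set α}
    (hF₀ : M.IsFlat F₀) (h₀ : matRank M F₀ = i - 1)
    (h₁ : M.IsFlat G₁) (h₂ : M.IsFlat G₂)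
    (hr₁ : matRank M G₁ = i) (hr₂ : matRank M G₂ = i) (hne : G₁ ≠ G₂)
    (hs₁ : F₀ ⊆ G₁) (hs₂ : F₀ ⊆ G₂) : G₁ ∩ G₂ = F₀ := by
  have hD : M.IsFlat (G₁ ∩ G₂) := flat_inter h₁ h₂
  have hle : matRank M (G₁ ∩ G₂) ≤ i := by
    rw [← hr₁]; exact matRank_mono hfin inter_subset_left h₁.subset_ground
  have hge : i - 1 ≤ matRank M (G₁ ∩ G₂) := by
    rw [← h₀]
    exact matRank_mono hfin (subset_inter hs₁ hs₂) hD.subset_ground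
  have hnei : matRank M (G₁ ∩ G₂) ≠ i := by
    intro h
    have e₁ : G₁ ∩ G₂ = G₁ :=
      flat_eq_of_subset_rank hfin hD h₁ inter_subset_left (by omega)
    have e₂ : G₁ ∩ G₂ = G₂ :=
      flat_eq_of_subset_rank hfin hD h₂ inter_subset_right (by omega)
    exact hne (e₁.symm.trans e₂)
  exact (flat_eq_of_subset_rank hfin hF₀ hD (subset_inter hs₁ hs₂) (by omega)).symm

lemma half (hfin : M.E.Finite) {r i : ℕ} {G G' : ℕ → Set α}
    (hi1 : 1 ≤ i) (hir : i + 1 ≤ r)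
    (hagree : ∀ j, j ≠ i → G' j = G j)
    (hG0 : G 0 = ∅) (hmono : ∀ j < r, G j ⊆ G (j + 1))
    (hG'rk : matRank M (G' i) = i) (hG'E : G' i ⊆ M.E)
    (hG'mono : ∀ j < r, G' j ⊆ G' (j + 1))
    (hlo : G (i - 1) ⊆ G' i)
    (hunion : G i ∪ G' i = G (i + 1)) :
    flagBases M r G ⊆ flagBases M r G' := by
  have hG'0 : G' 0 = ∅ := (hagree 0 (by omega)).trans hG0
  rw [flagBases_eq hfin hG0 hmono, flagBases_eq hfin hG'0 hG'mono]
  rintro B ⟨hB, hcum⟩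
  have hBfin : B.Finite := hfin.subset hB.subset_ground
  refine ⟨hB, ?_⟩
  intro j hjr
  rcases eq_or_ne j i with rfl | hne
  · have hle : (B ∩ G' j).ncard ≤ j := by
      have := indep_ncard_le_matRank hfin (J := B ∩ G' j) (X := G' j)
        (hB.indep.inter_right _) inter_subset_right hG'E
      omega
    have h1 := hsum hBfin (hmono j (by omega))
    rw [hcum j (by omega), hcum (j + 1) hir] at h1
    obtain ⟨y, hy⟩ : ∃ y, B ∩ (G (j + 1) \ G j) = {y} := ncard_eq_one.mp (by omega)
    have hymem : y ∈ B ∩ (G (j + 1) \ G j) := by rw [hy]; exact rfl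
    have hyG' : y ∈ G' j := by
      have := hymem.2.1
      rw [← hunion] at this
      exact this.resolve_left hymem.2.2
    have hsubs : insert y (B ∩ G (j - 1)) ⊆ B ∩ G' j := by
      refine insert_subset ⟨hymem.1, hyG'⟩ ?_
      exact inter_subset_inter_right _ hlo
    have hny : y ∉ B ∩ G (j - 1) := by
      intro h
      exact hymem.2.2 (chain_mono hmono (by omega : j - 1 ≤ j) (by omega) h.2)
    have hcard : (insert y (B ∩ G (j - 1))).ncard = j := by
      rw [Set.ncard_insert_of_notMem hny (hBfin.inter_of_left _),
        hcum (j - 1) (by omega)]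
      omega
    have hge := Set.ncard_le_ncard hsubs (hBfin.inter_of_left _)
    omega
  · rw [hagree j hne]
    exact hcum j hjr

end Meet
end MyAux

open MyAux Set in
/-- Let `∅ = F 0 ⊂ F 1 ⊂ ⋯ ⊂ F r = M.E` be a maximal flag of flats of a rank-`r`
matroid `M` on a finite ground set, let `1 ≤ i ≤ r-1`, and let `Fi' ≠ F i` be another
rank-`i` flat with `F (i-1) ⊂ Fi' ⊂ F (i+1)`; let `F'` be the flag obtained from `F` by
replacing `F i` with `Fi'`.  Then the following are equivalent:
(i) `F` and `F'` have the same associated families of minimum bases;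
(ii) the family of minimum bases of `F` equals the family of bases meeting each
`F j \ F (j-1)` (`j ∉ {i, i+1}`) once and `F (i+1) \ F (i-1)` twice;
(iii) `F i ∪ Fi' = F (i+1)`;
(iv) `F i` and `Fi'` are the only flats strictly between `F (i-1)` and `F (i+1)`. -/
theorem adjacent_flags_same_matroid_tfae {α : Type*} (M : Matroid α) (hfin : M.E.Finite)
    (r : ℕ) (hrk : matRank M M.E = r)
    (F : ℕ → Set α)
    (hflat : ∀ j ≤ r, M.IsFlat (F j) ∧ matRank M (F j) = j)
    (hchain : ∀ j < r, F j ⊂ F (j + 1))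
    (hF0 : F 0 = ∅) (hFr : F r = M.E)
    (i : ℕ) (hi1 : 1 ≤ i) (hir : i + 1 ≤ r)
    (Fi' : Set α) (hFi'flat : M.IsFlat Fi') (hFi'rk : matRank M Fi' = i)
    (hFi'ne : Fi' ≠ F i)
    (hFi'lo : F (i - 1) ⊂ Fi') (hFi'hi : Fi' ⊂ F (i + 1)) :
    [ flagBases M r F = flagBases M r (Function.update F i Fi'),
      flagBases M r F =
        {B | M.IsBase B ∧
          (∀ j ∈ Finset.Icc 1 r, j ≠ i → j ≠ i + 1 →
            (B ∩ (F j \ F (j - 1))).ncard = 1) ∧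
          (B ∩ (F (i + 1) \ F (i - 1))).ncard = 2},
      F i ∪ Fi' = F (i + 1),
      ∀ G : Set α, M.IsFlat G → F (i - 1) ⊂ G → G ⊂ F (i + 1) → G = F i ∨ G = Fi' ].TFAE := by
  have him1 : i - 1 + 1 = i := by omega
  have hiE : ∀ j ≤ r, F j ⊆ M.E := fun j hj => (hflat j hj).1.subset_ground
  have hmono : ∀ j < r, F j ⊆ F (j + 1) := fun j hj => (hchain j hj).subset
  have hFi'E : Fi' ⊆ M.E := hFi'flat.subset_ground
  have hsubii1 : F i ⊆ F (i + 1) := hmono i (by omega)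
  have hsubi1i : F (i - 1) ⊆ F i := by
    have := hmono (i - 1) (by omega); rwa [him1] at this
  have hmeet : F i ∩ Fi' = F (i - 1) :=
    flats_meet hfin hi1 (hflat (i - 1) (by omega)).1 (hflat (i - 1) (by omega)).2
      (hflat i (by omega)).1 hFi'flat (hflat i (by omega)).2 hFi'rk
      (Ne.symm hFi'ne) hsubi1i hFi'lo.subset
  have hupd_i : Function.update F i Fi' i = Fi' := Function.update_self i Fi' F
  have hupd_ne : ∀ j, j ≠ i → Function.update F i Fi' j = F j :=
    fun j hj => Function.update_of_ne hj Fi' F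
  have hF'mono : ∀ j < r, Function.update F i Fi' j ⊆ Function.update F i Fi' (j + 1) := by
    intro j hj
    rcases eq_or_ne j i with rfl | hji
    · rw [hupd_i, hupd_ne (j + 1) (by omega)]; exact hFi'hi.subset
    rcases eq_or_ne (j + 1) i with hji1 | hji1
    · rw [hupd_ne j hji, hji1, hupd_i]
      have hj' : j = i - 1 := by omega
      rw [hj']; exact hFi'lo.subset
    · rw [hupd_ne j hji, hupd_ne (j + 1) hji1]; exact hmono j hj
  have hub : ∀ B, M.Indep B → ∀ j ≤ r, (B ∩ F j).ncard ≤ j := by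
    intro B hB j hj
    have := indep_ncard_le_matRank hfin (J := B ∩ F j) (X := F j)
      (hB.inter_right _) inter_subset_right (hiE j hj)
    rw [(hflat j hj).2] at this; exact this
  tfae_have 3 → 1 := by
    intro h3
    apply subset_antisymm
    · exact half hfin hi1 hir hupd_ne hF0 hmono
        (by rw [hupd_i]; exact hFi'rk) (by rw [hupd_i]; exact hFi'E) hF'mono
        (by rw [hupd_i]; exact hFi'lo.subset) (by rw [hupd_i]; exact h3)
    · refine half hfin hi1 hir (fun j hj => (hupd_ne j hj).symm)
        (by rw [hupd_ne 0 (by omega)]; exact hF0) hF'mono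
        (hflat i (by omega)).2 (hiE i (by omega)) hmono
        (by rw [hupd_ne (i - 1) (by omega)]; exact hsubi1i) ?_
      rw [hupd_i, hupd_ne (i + 1) (by omega), union_comm]
      exact h3
  tfae_have 1 → 3 := by
    intro h1
    by_contra h3
    have hsubU : F i ∪ Fi' ⊆ F (i + 1) := union_subset hsubii1 hFi'hi.subset
    obtain ⟨z, hzF, hzU⟩ := exists_of_ssubset (hsubU.ssubset_of_ne h3)
    have hzFi : z ∉ F i := fun h => hzU (Or.inl h)
    have hzFi' : z ∉ Fi' := fun h => hzU (Or.inr h)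
    obtain ⟨J, hJ, hJc⟩ := exists_basis_counts hfin hflat hmono hF0 i (by omega)
    have hJcl : M.closure J = F i := by
      rw [hJ.closure_eq_closure, (hflat i (by omega)).1.closure]
    have hzJ : z ∉ J := fun h => hzFi (hJ.subset h)
    have hKind : M.Indep (insert z J) := by
      rw [hJ.indep.insert_indep_iff_of_notMem hzJ]
      exact ⟨hiE (i + 1) hir hzF, by rw [hJcl]; exact hzFi⟩
    have hJcard : J.ncard = i := by
      have := hJc i le_rfl
      rwa [inter_eq_self_of_subset_left hJ.subset] at this
    have hKcard : (insert z J).ncard = i + 1 := by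
      rw [Set.ncard_insert_of_notMem hzJ (indep_finite hfin hJ.indep), hJcard]
    have hKbasis : M.IsBasis (insert z J) (F (i + 1)) :=
      basis_of_indep_ncard hfin hKind
        (insert_subset hzF (hJ.subset.trans hsubii1)) (hiE _ hir)
        (by rw [(hflat (i + 1) hir).2, hKcard])
    obtain ⟨B, hB, hBK, hBc⟩ := exists_base_ext hfin hflat hmono hFr
      (r - (i + 1)) (i + 1) (by omega) _ hKbasis
    have hBlow : ∀ j ≤ i, B ∩ F j = J ∩ F j := by
      intro j hj
      have hsubj : F j ⊆ F (i + 1) := chain_mono hmono (by omega) (by omega)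
      have h1 : B ∩ F j = insert z J ∩ F j := by
        rw [← hBK, inter_assoc, inter_eq_self_of_subset_right hsubj]
      rw [h1, Set.insert_inter_of_notMem
        (fun h => hzFi (chain_mono hmono hj (by omega) h))]
    have hBcum : ∀ j ≤ r, (B ∩ F j).ncard = j := by
      intro j hj
      rcases Nat.lt_or_ge j (i + 1) with h | h
      · rw [hBlow j (by omega)]; exact hJc j (by omega)
      · exact hBc j h hj
    have hBmemF : B ∈ flagBases M r F := by
      rw [flagBases_eq hfin hF0 hmono]; exact ⟨hB, hBcum⟩
    have hBmemF' : B ∈ flagBases M r (Function.update F i Fi') := h1 ▸ hBmemF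
    obtain ⟨-, hsteps⟩ := hBmemF'
    have hstep_i := hsteps i (Finset.mem_Icc.mpr ⟨hi1, by omega⟩)
    rw [hupd_i, hupd_ne (i - 1) (by omega)] at hstep_i
    have hempty : B ∩ (Fi' \ F (i - 1)) = ∅ := by
      rw [eq_empty_iff_forall_notMem]
      rintro x ⟨hxB, hxFi', hxFm⟩
      have hxK : x ∈ insert z J := by
        rw [← hBK]; exact ⟨hxB, hFi'hi.subset hxFi'⟩
      rcases mem_insert_iff.mp hxK with rfl | hxJ'
      · exact hzFi' hxFi'
      · exact hxFm (hmeet ▸ ⟨hJ.subset hxJ', hxFi'⟩)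
    rw [hempty] at hstep_i
    simp at hstep_i
  tfae_have 3 → 2 := by
    intro h3
    rw [flagBases_eq hfin hF0 hmono]
    ext B
    simp only [mem_setOf_eq]
    constructor
    · rintro ⟨hB, hcum⟩
      have hBf : B.Finite := hfin.subset hB.subset_ground
      refine ⟨hB, ?_, ?_⟩
      · intro j hj _ _
        rw [Finset.mem_Icc] at hj
        have h1 := hsum hBf (chain_mono hmono (show j - 1 ≤ j by omega) hj.2)
        rw [hcum j hj.2, hcum (j - 1) (by omega)] at h1
        omega
      · have h1 := hsum hBf (chain_mono hmono (show i - 1 ≤ i + 1 by omega) hir)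
        rw [hcum (i + 1) hir, hcum (i - 1) (by omega)] at h1
        omega
    · rintro ⟨hB, hsteps, hdouble⟩
      have hBf : B.Finite := hfin.subset hB.subset_ground
      refine ⟨hB, ?_⟩
      have hlow : ∀ j ≤ i - 1, (B ∩ F j).ncard = j := by
        intro j hj
        induction j with
        | zero => simp [hF0]
        | succ n ih =>
          have h1 := hsum hBf (hmono n (by omega))
          have h2 := hsteps (n + 1) (Finset.mem_Icc.mpr ⟨by omega, by omega⟩)
            (by omega) (by omega)
          simp only [Nat.add_sub_cancel] at h2
          rw [ih (by omega)] at h1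
          omega
      have hcumi1m : (B ∩ F (i - 1)).ncard = i - 1 := hlow (i - 1) le_rfl
      have hcumi : (B ∩ F i).ncard = i := by
        have hle := hub B hB.indep i (by omega)
        by_contra hneq
        have h1 := hsum hBf hsubi1i
        have hempty : B ∩ (F i \ F (i - 1)) = ∅ := by
          rw [← Set.ncard_eq_zero (hBf.inter_of_left _)]
          omega
        have hdsub : B ∩ (F (i + 1) \ F (i - 1)) ⊆ Fi' \ F (i - 1) := by
          rintro x ⟨hxB, hxF1, hxFm⟩
          have hxFi : x ∉ F i := by
            intro h
            have : x ∈ B ∩ (F i \ F (i - 1)) := ⟨hxB, h, hxFm⟩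
            rw [hempty] at this
            exact this
          have hx' : x ∈ F i ∪ Fi' := by rw [h3]; exact hxF1
          exact ⟨hx'.resolve_left hxFi, hxFm⟩
        have hunionsub : (B ∩ F (i - 1)) ∪ (B ∩ (F (i + 1) \ F (i - 1))) ⊆ B ∩ Fi' := by
          rintro x (⟨h1', h2'⟩ | hx)
          · exact ⟨h1', hFi'lo.subset h2'⟩
          · exact ⟨hx.1, (hdsub hx).1⟩
        have hdisj : Disjoint (B ∩ F (i - 1)) (B ∩ (F (i + 1) \ F (i - 1))) :=
          Set.disjoint_left.mpr fun {x} hx1 hx2 => hx2.2.2 hx1.2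
        have hcard := Set.ncard_union_eq hdisj (hBf.inter_of_left _) (hBf.inter_of_left _)
        have hle' := Set.ncard_le_ncard hunionsub (hBf.inter_of_left _)
        have hbound := indep_ncard_le_matRank hfin (J := B ∩ Fi') (X := Fi')
          (hB.indep.inter_right _) inter_subset_right hFi'E
        rw [hFi'rk] at hbound
        omega
      have hcumi1 : (B ∩ F (i + 1)).ncard = i + 1 := by
        have h1 := hsum hBf (chain_mono hmono (show i - 1 ≤ i + 1 by omega) hir)
        omega
      have hhigh : ∀ j, i + 1 ≤ j → j ≤ r → (B ∩ F j).ncard = j := by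
        intro j hj1
        induction j, hj1 using Nat.le_induction with
        | base => exact fun _ => hcumi1
        | succ n hn ih =>
          intro hj2
          have h1 := hsum hBf (hmono n (by omega))
          have h2 := hsteps (n + 1) (Finset.mem_Icc.mpr ⟨by omega, hj2⟩)
            (by omega) (by omega)
          simp only [Nat.add_sub_cancel] at h2
          rw [ih (by omega)] at h1
          omega
      intro j hj
      rcases Nat.lt_or_ge j i with h | h
      · exact hlow j (by omega)
      rcases eq_or_ne j i with rfl | h'
      · exact hcumi
      · exact hhigh j (by omega) hj
  tfae_have 2 → 3 := by
    intro h2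
    by_contra h3
    have hsubU : F i ∪ Fi' ⊆ F (i + 1) := union_subset hsubii1 hFi'hi.subset
    obtain ⟨z, hzF, hzU⟩ := exists_of_ssubset (hsubU.ssubset_of_ne h3)
    have hzFi : z ∉ F i := fun h => hzU (Or.inl h)
    have hzFi' : z ∉ Fi' := fun h => hzU (Or.inr h)
    have hzFm : z ∉ F (i - 1) := fun h => hzFi (hsubi1i h)
    obtain ⟨u, huFi', huFm⟩ := exists_of_ssubset hFi'lo
    obtain ⟨J, hJ, hJc⟩ := exists_basis_counts hfin hflat hmono hF0 (i - 1) (by omega)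
    have hJcl : M.closure J = F (i - 1) := by
      rw [hJ.closure_eq_closure, (hflat (i - 1) (by omega)).1.closure]
    have hJcard : J.ncard = i - 1 := by
      have := hJc (i - 1) le_rfl
      rwa [inter_eq_self_of_subset_left hJ.subset] at this
    have hzJ : z ∉ J := fun h => hzFm (hJ.subset h)
    have hKzind : M.Indep (insert z J) := by
      rw [hJ.indep.insert_indep_iff_of_notMem hzJ]
      exact ⟨hiE (i + 1) hir hzF, by rw [hJcl]; exact hzFm⟩
    have hGzbasis : M.IsBasis (insert z J) (M.closure (insert z J)) := hKzind.isBasis_closure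
    have hKzcard : (insert z J).ncard = i := by
      rw [Set.ncard_insert_of_notMem hzJ (indep_finite hfin hJ.indep), hJcard]; omega
    have hGzrk : matRank M (M.closure (insert z J)) = i := by
      rw [matRank_basis hfin hGzbasis (M.closure_subset_ground _), hKzcard]
    have hzGz : z ∈ M.closure (insert z J) :=
      M.subset_closure _ hKzind.subset_ground (mem_insert z J)
    have hGzlo : F (i - 1) ⊆ M.closure (insert z J) := by
      rw [← hJcl]; exact M.closure_subset_closure (subset_insert z J)
    have hGzne : M.closure (insert z J) ≠ Fi' := fun h => hzFi' (h ▸ hzGz)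
    have hmeet2 : M.closure (insert z J) ∩ Fi' = F (i - 1) :=
      flats_meet hfin hi1 (hflat (i - 1) (by omega)).1 (hflat (i - 1) (by omega)).2
        (flat_closure M (insert z J)) hFi'flat hGzrk hFi'rk hGzne hGzlo hFi'lo.subset
    have huGz : u ∉ M.closure (insert z J) := fun h => huFm (hmeet2 ▸ ⟨h, huFi'⟩)
    have huFi : u ∉ F i := fun h => huFm (hmeet ▸ ⟨h, huFi'⟩)
    have huKz : u ∉ insert z J := by
      rintro (rfl | h)
      · exact hzFi' huFi'
      · exact huFm (hJ.subset h)
    have hK2ind : M.Indep (insert u (insert z J)) := by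
      rw [hKzind.insert_indep_iff_of_notMem huKz]
      exact ⟨hFi'E huFi', huGz⟩
    have hK2card : (insert u (insert z J)).ncard = i + 1 := by
      rw [Set.ncard_insert_of_notMem huKz (indep_finite hfin hKzind), hKzcard]
    have hK2sub : insert u (insert z J) ⊆ F (i + 1) :=
      insert_subset (hFi'hi.subset huFi')
        (insert_subset hzF (hJ.subset.trans (hsubi1i.trans hsubii1)))
    have hK2basis : M.IsBasis (insert u (insert z J)) (F (i + 1)) :=
      basis_of_indep_ncard hfin hK2ind hK2sub (hiE _ hir)
        (by rw [(hflat (i + 1) hir).2, hK2card])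
    obtain ⟨B, hB, hBK, hBc⟩ := exists_base_ext hfin hflat hmono hFr
      (r - (i + 1)) (i + 1) (by omega) _ hK2basis
    have hBf : B.Finite := hfin.subset hB.subset_ground
    have hBlow : ∀ j ≤ i, B ∩ F j = J ∩ F j := by
      intro j hj
      have hsubj : F j ⊆ F (i + 1) := chain_mono hmono (by omega) (by omega)
      have hsubji : F j ⊆ F i := chain_mono hmono hj (by omega)
      have h1 : B ∩ F j = insert u (insert z J) ∩ F j := by
        rw [← hBK, inter_assoc, inter_eq_self_of_subset_right hsubj]
      rw [h1, Set.insert_inter_of_notMem (fun h => huFi (hsubji h)),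
        Set.insert_inter_of_notMem (fun h => hzFi (hsubji h))]
    have hcumlow : ∀ j ≤ i - 1, (B ∩ F j).ncard = j := by
      intro j hj
      rw [hBlow j (by omega)]; exact hJc j hj
    have hcumim : (B ∩ F (i - 1)).ncard = i - 1 := hcumlow (i - 1) le_rfl
    have hcumi : (B ∩ F i).ncard = i - 1 := by
      rw [hBlow i le_rfl, inter_eq_self_of_subset_left (hJ.subset.trans hsubi1i), hJcard]
    have hcumhigh : ∀ j, i + 1 ≤ j → j ≤ r → (B ∩ F j).ncard = j := hBc
    have hBmem2 : B ∈ {B | M.IsBase B ∧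
        (∀ j ∈ Finset.Icc 1 r, j ≠ i → j ≠ i + 1 →
          (B ∩ (F j \ F (j - 1))).ncard = 1) ∧
        (B ∩ (F (i + 1) \ F (i - 1))).ncard = 2} := by
      refine ⟨hB, ?_, ?_⟩
      · intro j hj hji hji1
        rw [Finset.mem_Icc] at hj
        have h1 := hsum hBf (chain_mono hmono (show j - 1 ≤ j by omega) hj.2)
        rcases Nat.lt_or_ge j i with h | h
        · rw [hcumlow j (by omega), hcumlow (j - 1) (by omega)] at h1
          omega
        · have hj2 : i + 1 ≤ j - 1 := by omega
          rw [hcumhigh j (by omega) hj.2, hcumhigh (j - 1) hj2 (by omega)] at h1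
          omega
      · have h1 := hsum hBf (chain_mono hmono (show i - 1 ≤ i + 1 by omega) hir)
        rw [hcumim, hcumhigh (i + 1) le_rfl hir] at h1
        omega
    rw [← h2] at hBmem2
    obtain ⟨-, hsteps⟩ := hBmem2
    have hstep_i := hsteps i (Finset.mem_Icc.mpr ⟨hi1, by omega⟩)
    have h1 := hsum hBf hsubi1i
    rw [hcumim, hcumi, hstep_i] at h1
    omega
  tfae_have 3 → 4 := by
    intro h3 G hG hlo hhi
    have hGsub : G ⊆ M.E := hG.subset_ground
    have hle : matRank M G ≤ i + 1 := by
      rw [← (hflat (i + 1) hir).2]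
      exact matRank_mono hfin hhi.subset (hiE _ hir)
    have hge : i - 1 ≤ matRank M G := by
      rw [← (hflat (i - 1) (by omega)).2]
      exact matRank_mono hfin hlo.subset hGsub
    have hne1 : matRank M G ≠ i + 1 := fun h =>
      hhi.ne (flat_eq_of_subset_rank hfin hG (hflat (i + 1) hir).1 hhi.subset
        (by rw [(hflat (i + 1) hir).2, h]))
    have hne2 : matRank M G ≠ i - 1 := fun h =>
      hlo.ne (flat_eq_of_subset_rank hfin (hflat (i - 1) (by omega)).1 hG hlo.subset
        (by rw [(hflat (i - 1) (by omega)).2, h]))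
    have hrG : matRank M G = i := by omega
    by_contra hcon
    push_neg at hcon
    obtain ⟨hne_i, hne_i'⟩ := hcon
    have hm1 : G ∩ F i = F (i - 1) :=
      flats_meet hfin hi1 (hflat (i - 1) (by omega)).1 (hflat (i - 1) (by omega)).2
        hG (hflat i (by omega)).1 hrG (hflat i (by omega)).2 hne_i hlo.subset hsubi1i
    have hm2 : G ∩ Fi' = F (i - 1) :=
      flats_meet hfin hi1 (hflat (i - 1) (by omega)).1 (hflat (i - 1) (by omega)).2
        hG hFi'flat hrG hFi'rk hne_i' hlo.subset hFi'lo.subset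
    obtain ⟨x, hxG, hxF⟩ := exists_of_ssubset hlo
    have hxF1 : x ∈ F (i + 1) := hhi.subset hxG
    rw [← h3] at hxF1
    rcases hxF1 with h | h
    · exact hxF (hm1 ▸ ⟨hxG, h⟩)
    · exact hxF (hm2 ▸ ⟨hxG, h⟩)
  tfae_have 4 → 3 := by
    intro h4
    apply subset_antisymm (union_subset hsubii1 hFi'hi.subset)
    intro x hx
    by_contra hxn
    have hxFi : x ∉ F i := fun h => hxn (Or.inl h)
    have hxFi' : x ∉ Fi' := fun h => hxn (Or.inr h)
    have hxFm : x ∉ F (i - 1) := fun h => hxFi (hsubi1i h)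
    obtain ⟨J, hJ⟩ := M.exists_isBasis (F (i - 1)) (hiE (i - 1) (by omega))
    have hJcl : M.closure J = F (i - 1) := by
      rw [hJ.closure_eq_closure, (hflat (i - 1) (by omega)).1.closure]
    have hxJ : x ∉ J := fun h => hxFm (hJ.subset h)
    have hKind : M.Indep (insert x J) := by
      rw [hJ.indep.insert_indep_iff_of_notMem hxJ]
      exact ⟨hiE (i + 1) hir hx, by rw [hJcl]; exact hxFm⟩
    have hJcard : J.ncard = i - 1 := by
      have := matRank_basis hfin hJ (hiE (i - 1) (by omega))
      rw [(hflat (i - 1) (by omega)).2] at this; omega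
    have hGxbasis : M.IsBasis (insert x J) (M.closure (insert x J)) :=
      hKind.isBasis_closure
    have hGxrk : matRank M (M.closure (insert x J)) = i := by
      rw [matRank_basis hfin hGxbasis (M.closure_subset_ground _),
        Set.ncard_insert_of_notMem hxJ (indep_finite hfin hJ.indep), hJcard]
      omega
    have hxGx : x ∈ M.closure (insert x J) :=
      M.subset_closure _ hKind.subset_ground (mem_insert x J)
    have hGxlo : F (i - 1) ⊂ M.closure (insert x J) := by
      refine ssubset_of_subset_of_ne ?_ ?_
      · rw [← hJcl]; exact M.closure_subset_closure (subset_insert x J)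
      · intro he
        rw [← he] at hxGx
        exact hxFm hxGx
    have hGxhi : M.closure (insert x J) ⊂ F (i + 1) := by
      refine ssubset_of_subset_of_ne ?_ ?_
      · have h1 : insert x J ⊆ F (i + 1) :=
          insert_subset hx (hJ.subset.trans (hsubi1i.trans hsubii1))
        have := M.closure_subset_closure h1
        rwa [(hflat (i + 1) hir).1.closure] at this
      · intro he
        rw [he, (hflat (i + 1) hir).2] at hGxrk
        omega
    rcases h4 _ (flat_closure M (insert x J)) hGxlo hGxhi with he | he
    · exact hxFi (he ▸ hxGx)
    · exact hxFi' (he ▸ hxGx)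
  tfae_finish
end

section
/- Let n ≥ 3 and let ω be a weight function on the edges of K_n. Then ω satisfies the triangle condition (in every triangle of K_n the maximum of the three edge weights is attained by at least two of the edges) if and only if in every cycle of K_n the maximum of the weights of the edges of the cycle is attained by at least two edges of the cycle. -/
/-- Two of the three reals `a, b, c` are equal and not less than the third; equivalently,
the maximum of the three is attained at least twice. -/
def TwoMax (a b c : ℝ) : Prop :=
  (a = b ∧ c ≤ a) ∨ (a = c ∧ b ≤ a) ∨ (b = c ∧ a ≤ b)

/-- The triangle condition for a weight function `ω` on the edges of the complete graph
on `Fin n`: in every triangle, two of the three edge weights are equal and not less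
than the third. -/
def TriangleCondition (n : ℕ) (ω : Sym2 (Fin n) → ℝ) : Prop :=
  ∀ u v w : Fin n, u ≠ v → v ≠ w → u ≠ w →
    TwoMax (ω s(u, v)) (ω s(v, w)) (ω s(u, w))

/-- The cycle condition for a weight function `ω` on the edges of the complete graph on
`Fin n`: in every cycle, the maximum edge weight is attained by at least two edges of
the cycle. -/
def CycleCondition (n : ℕ) (ω : Sym2 (Fin n) → ℝ) : Prop :=
  ∀ (x : Fin n) (C : SimpleGraph.Walk (⊤ : SimpleGraph (Fin n)) x x), C.IsCycle →
    ∃ e ∈ C.edges, ∃ f ∈ C.edges, e ≠ f ∧ ω e = ω f ∧ ∀ g ∈ C.edges, ω g ≤ ω e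

/-- The ω-weight of a graph `T` on `Fin n`: the sum of `ω` over the edges of `T`. -/
noncomputable def graphWeight (n : ℕ) (ω : Sym2 (Fin n) → ℝ)
    (T : SimpleGraph (Fin n)) : ℝ :=
  ∑ᶠ e ∈ T.edgeSet, ω e

/-- `T` is an ω-minimum spanning tree of the complete graph on `Fin n`: it is a tree on
the vertex set `Fin n` and no such tree has strictly smaller ω-weight. -/
def IsMinSpanningTree (n : ℕ) (ω : Sym2 (Fin n) → ℝ) (T : SimpleGraph (Fin n)) : Prop :=
  T.IsTree ∧ ∀ T' : SimpleGraph (Fin n), T'.IsTree →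
    graphWeight n ω T ≤ graphWeight n ω T'

/-!
The triangle condition says exactly that `ω` is an ultrametric on the vertices:
`ω {u, w} ≤ max (ω {u, v}) (ω {v, w})`. Iterating this along a walk from `a` to `b`, the weight
of `{a, b}` is at most the largest weight on the walk. The rest of a cycle through an edge
`{a, b}` is such a walk, so some other edge of the cycle weighs at least as much as `{a, b}`;
applied to a heaviest edge this yields a second heaviest one. Conversely, a triangle is a cycle.
-/

lemma twoMax_iff_le_max {a b c : ℝ} :
    TwoMax a b c ↔ a ≤ max b c ∧ b ≤ max a c ∧ c ≤ max a b := by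
  simp only [TwoMax, le_max_iff]
  grind

def IsUltrametricWeight {V α : Type*} [LinearOrder α] (ω : Sym2 V → α) : Prop :=
  ∀ u v w, u ≠ w → ω s(u, w) ≤ max (ω s(u, v)) (ω s(v, w))

lemma TriangleCondition.isUltrametricWeight {n : ℕ} {ω : Sym2 (Fin n) → ℝ}
    (h : TriangleCondition n ω) : IsUltrametricWeight ω := by
  intro u v w huw
  by_cases huv : u = v
  · subst huv; exact le_max_right _ _
  by_cases hvw : v = w
  · subst hvw; exact le_max_left _ _
  exact (twoMax_iff_le_max.mp (h u v w huv hvw huw)).2.2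

namespace SimpleGraph

variable {V : Type*} {G : SimpleGraph V}

lemma exists_isCycle_edges_eq_of_adj {u v w : V} (huv : G.Adj u v) (hvw : G.Adj v w)
    (hwu : G.Adj w u) :
    ∃ C : G.Walk u u, C.IsCycle ∧ C.edges = [s(u, v), s(v, w), s(w, u)] := by
  refine ⟨.cons huv (.cons hvw (.cons hwu .nil)), ?_, rfl⟩
  rw [Walk.cons_isCycle_iff]
  simp [Walk.isPath_def, huv.ne, hvw.ne, hwu.ne, huv.ne.symm, hwu.ne.symm]

namespace Walk

lemma IsCycle.exists_walk_subset_edges_of_mem_edges {x a b : V} {C : G.Walk x x}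
    (hC : C.IsCycle) (he : s(a, b) ∈ C.edges) :
    ∃ p : G.Walk a b, s(a, b) ∉ p.edges ∧ ∀ f ∈ p.edges, f ∈ C.edges := by
  set H := fromEdgeSet {f | f ∈ C.edges}
  have hCH : ∀ f ∈ C.edges, f ∈ H.edgeSet := fun f hf => by
    simpa [H, hf] using G.not_isDiag_of_mem_edgeSet (C.edges_subset_edgeSet hf)
  have hHC : ∀ f ∈ H.edgeSet, f ∈ C.edges := fun f hf => by
    simp only [H, edgeSet_fromEdgeSet] at hf
    exact hf.1
  -- In the graph of the edges of `C`, the edge `s(a, b)` lies on a cycle, so it is no bridge.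
  obtain ⟨-, hreach⟩ := adj_and_reachable_delete_edges_iff_exists_cycle.mpr
    ⟨x, C.transfer H hCH, hC.transfer hCH, by rwa [edges_transfer]⟩
  obtain ⟨q, hq⟩ := reachable_deleteEdges_iff_exists_walk.mp hreach
  have hqG : ∀ f ∈ q.edges, f ∈ G.edgeSet := fun f hf =>
    C.edges_subset_edgeSet (hHC f (q.edges_subset_edgeSet hf))
  refine ⟨q.transfer G hqG, ?_, ?_⟩
  · rwa [edges_transfer]
  · intro f hf
    rw [edges_transfer] at hf
    exact hHC f (q.edges_subset_edgeSet hf)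

variable {α : Type*} [LinearOrder α] {ω : Sym2 V → α}

lemma exists_mem_edges_le_of_isUltrametricWeight (hω : IsUltrametricWeight ω) {u v : V}
    (p : G.Walk u v) (huv : u ≠ v) : ∃ e ∈ p.edges, ω s(u, v) ≤ ω e := by
  induction p with
  | nil => exact absurd rfl huv
  | @cons u w v hadj q ih =>
    by_cases hwv : w = v
    · subst hwv
      exact ⟨s(u, w), by simp, le_rfl⟩
    obtain ⟨e, he, hle⟩ := ih hwv
    rcases le_max_iff.mp (hω u w v huv) with h | h
    · exact ⟨s(u, w), by simp, h⟩
    · exact ⟨e, by simp [he], h.trans hle⟩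

lemma IsCycle.exists_mem_edges_ne_le_of_isUltrametricWeight (hω : IsUltrametricWeight ω)
    {x : V} {C : G.Walk x x} (hC : C.IsCycle) {e : Sym2 V} (he : e ∈ C.edges) :
    ∃ f ∈ C.edges, f ≠ e ∧ ω e ≤ ω f := by
  induction e using Sym2.ind with | _ a b => ?_
  obtain ⟨p, hpe, hpC⟩ := hC.exists_walk_subset_edges_of_mem_edges he
  obtain ⟨f, hf, hle⟩ :=
    exists_mem_edges_le_of_isUltrametricWeight hω p (C.adj_of_mem_edges he).ne
  exact ⟨f, hpC f hf, ne_of_mem_of_not_mem hf hpe, hle⟩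

end Walk

end SimpleGraph

open SimpleGraph

lemma cycleCondition_iff_forall_exists_ne_le {n : ℕ} {ω : Sym2 (Fin n) → ℝ} :
    CycleCondition n ω ↔
      ∀ (x : Fin n) (C : (⊤ : SimpleGraph (Fin n)).Walk x x), C.IsCycle →
      ∀ e ∈ C.edges, ∃ f ∈ C.edges, f ≠ e ∧ ω e ≤ ω f := by
  constructor
  · intro h x C hC e he
    obtain ⟨g, hg, g', hg', hne, heq, hmax⟩ := h x C hC
    by_cases heg : e = g
    · exact ⟨g', hg', heg ▸ hne.symm, heg ▸ heq.le⟩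
    · exact ⟨g, hg, Ne.symm heg, hmax e he⟩
  · intro h x C hC
    have hne : (C.edges : Multiset (Sym2 (Fin n))) ≠ 0 := by
      simpa [Walk.edges_eq_nil] using hC.not_nil
    obtain ⟨e, he, hmax⟩ := Multiset.exists_max_image ω hne
    rw [Multiset.mem_coe] at he
    obtain ⟨f, hf, hfe, hle⟩ := h x C hC e he
    exact ⟨e, he, f, hf, hfe.symm, le_antisymm hle (hmax f hf), hmax⟩

theorem triangleCondition_iff_cycleCondition_general (n : ℕ)
    (ω : Sym2 (Fin n) → ℝ) :
    TriangleCondition n ω ↔ CycleCondition n ω := by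
  rw [cycleCondition_iff_forall_exists_ne_le]
  constructor
  · intro h x C hC e he
    exact hC.exists_mem_edges_ne_le_of_isUltrametricWeight h.isUltrametricWeight he
  · intro h u v w huv hvw huw
    obtain ⟨C, hC, hCe⟩ := exists_isCycle_edges_eq_of_adj (G := ⊤)
      ((top_adj _ _).mpr huv) ((top_adj _ _).mpr hvw) ((top_adj _ _).mpr (Ne.symm huw))
    have hdom : ∀ e ∈ [s(u, v), s(v, w), s(w, u)],
        ∃ f ∈ [s(u, v), s(v, w), s(w, u)], f ≠ e ∧ ω e ≤ ω f := hCe ▸ h u C hC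
    simpa [twoMax_iff_le_max, le_max_iff, Sym2.eq_swap (a := w), huv, hvw, huw, huv.symm,
      hvw.symm, huw.symm] using hdom

/-- For `n ≥ 3`, a weight function on the edges of the complete graph `K_n` satisfies
the triangle condition (in every triangle the maximum weight is attained at least
twice) if and only if in every cycle of `K_n` the maximum weight is attained by at
least two edges of the cycle. -/
theorem triangleCondition_iff_cycleCondition (n : ℕ) (hn : 3 ≤ n)
    (ω : Sym2 (Fin n) → ℝ) :
    TriangleCondition n ω ↔ CycleCondition n ω :=
  triangleCondition_iff_cycleCondition_general n ω
end

section
/- Let n ≥ 2 and let ω be a weight function on the edges of K_n. If in every cycle of K_n the maximum of the weights of the edges of the cycle is attained by at least two edges of the cycle, then every edge of K_n is contained in some ω-minimum spanning tree of K_n. -/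
/-!
Fix an ω-minimum spanning tree `T` and an edge `uv` of `K_n` outside `T`. Together with the
`T`-path from `v` to `u`, the edge `uv` closes a cycle; since the maximum weight on that cycle is
attained twice, some edge `f` of the path weighs at least `ω(uv)`. Exchanging `f` for `uv` gives a
spanning tree of weight at most that of `T`, hence again a minimum one, and it contains `uv`.
-/

open SimpleGraph

namespace SimpleGraph

variable {V : Type*} {G H : SimpleGraph V} {u v : V}

lemma Walk.IsPath.isCycle_cons_mapLe (hGH : G ≤ H) {p : G.Walk v u} (hp : p.IsPath)
    (hadj : H.Adj u v) (hnadj : ¬G.Adj u v) : (Walk.cons hadj (p.mapLe hGH)).IsCycle := by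
  rw [Walk.cons_isCycle_iff, Walk.edges_mapLe_eq_edges, Walk.isPath_mapLe]
  exact ⟨hp, fun h => hnadj (p.edges_subset_edgeSet h)⟩

lemma edgeSet_sup_edge_deleteEdges {f : Sym2 V} (huv : u ≠ v) (hf : f ≠ s(u, v)) :
    ((G ⊔ edge u v).deleteEdges {f}).edgeSet = insert s(u, v) (G.edgeSet \ {f}) := by
  ext g
  simp only [edgeSet_deleteEdges, edgeSet_sup, edgeSet_edge_of_ne huv, Set.mem_sdiff,
    Set.mem_union, Set.mem_insert_iff, Set.mem_singleton_iff]
  grind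

lemma IsTree.isTree_sup_edge_deleteEdges [Finite V] {T : SimpleGraph V} (hT : T.IsTree)
    (hnadj : ¬T.Adj u v) (huv : u ≠ v) {p : T.Walk v u} (hp : p.IsPath) {f : Sym2 V}
    (hf : f ∈ p.edges) : ((T ⊔ edge u v).deleteEdges {f}).IsTree := by
  have hfT : f ∈ T.edgeSet := p.edges_subset_edgeSet hf
  have hfuv : f ≠ s(u, v) := by rintro rfl; exact hnadj hfT
  have huvT : s(u, v) ∉ T.edgeSet := hnadj
  have hadj : (T ⊔ edge u v).Adj u v := Or.inr (by simp [edge_adj, huv])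
  have hcycle := hp.isCycle_cons_mapLe le_sup_left hadj hnadj
  rw [isTree_iff_connected_and_card] at hT ⊢
  constructor
  · have hnb : ¬(T ⊔ edge u v).IsBridge f := fun hb =>
      hb.notMem_edges_of_isCycle hcycle (by simp [hf])
    induction f using Sym2.ind with
    | _ a b => exact (hT.1.mono le_sup_left).connected_delete_edge_of_not_isBridge hnb
  · have hfin : T.edgeSet.Finite := Set.toFinite _
    rw [edgeSet_sup_edge_deleteEdges huv hfuv, Nat.card_coe_set_eq,
      Set.ncard_insert_of_notMem (fun h => huvT h.1) hfin.sdiff,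
      Set.ncard_sdiff_singleton_add_one hfT hfin, ← Nat.card_coe_set_eq, hT.2]

end SimpleGraph

lemma finsum_mem_insert_sdiff_singleton_add {α M : Type*} [AddCommMonoid M] (φ : α → M)
    {s : Set α} (hs : s.Finite) {a b : α} (ha : a ∉ s) (hb : b ∈ s) :
    (∑ᶠ x ∈ insert a (s \ {b}), φ x) + φ b = (∑ᶠ x ∈ s, φ x) + φ a := by
  have hsplit : ∑ᶠ x ∈ s, φ x = φ b + ∑ᶠ x ∈ s \ {b}, φ x := by
    rw [← finsum_mem_insert φ (show b ∉ s \ {b} from fun h => h.2 rfl) hs.sdiff,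
      Set.insert_sdiff_singleton, Set.insert_eq_of_mem hb]
  rw [hsplit, finsum_mem_insert _ (fun h => ha h.1) hs.sdiff]
  abel

lemma CycleCondition.exists_mem_edges_weight_le {n : ℕ} {ω : Sym2 (Fin n) → ℝ}
    (hcyc : CycleCondition n ω) {T : SimpleGraph (Fin n)} {u v : Fin n} (hnadj : ¬T.Adj u v)
    (huv : u ≠ v) {p : T.Walk v u} (hp : p.IsPath) : ∃ f ∈ p.edges, ω s(u, v) ≤ ω f := by
  set c := Walk.cons (show (⊤ : SimpleGraph (Fin n)).Adj u v from huv) (p.mapLe le_top)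
  have hedges : c.edges = s(u, v) :: p.edges := by simp [c]
  obtain ⟨e₁, he₁, e₂, he₂, hne, heq, hmax⟩ :=
    hcyc u c (hp.isCycle_cons_mapLe le_top _ hnadj)
  have hle : ω s(u, v) ≤ ω e₁ := hmax _ (by simp [hedges])
  -- one of the two maximal edges differs from `uv`, so it lies on `p`
  rw [hedges] at he₁ he₂
  by_cases h₁ : e₁ = s(u, v)
  · exact ⟨e₂, (List.mem_cons.1 he₂).resolve_left (fun h => hne (h₁.trans h.symm)), heq ▸ hle⟩
  · exact ⟨e₁, (List.mem_cons.1 he₁).resolve_left h₁, hle⟩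

lemma exists_isMinSpanningTree (n : ℕ) [Nonempty (Fin n)] (ω : Sym2 (Fin n) → ℝ) :
    ∃ T, IsMinSpanningTree n ω T := by
  obtain ⟨T₀, -, hT₀⟩ := (connected_top (V := Fin n)).exists_isTree_le
  obtain ⟨T, hT, hmin⟩ := Set.exists_min_image {T : SimpleGraph (Fin n) | T.IsTree}
    (graphWeight n ω) (Set.toFinite _) ⟨T₀, hT₀⟩
  exact ⟨T, hT, hmin⟩

lemma IsMinSpanningTree.exchange {n : ℕ} {ω : Sym2 (Fin n) → ℝ} {T : SimpleGraph (Fin n)}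
    (hT : IsMinSpanningTree n ω T) {u v : Fin n} (hnadj : ¬T.Adj u v) (huv : u ≠ v)
    {p : T.Walk v u} (hp : p.IsPath) {f : Sym2 (Fin n)} (hf : f ∈ p.edges)
    (hω : ω s(u, v) ≤ ω f) : IsMinSpanningTree n ω ((T ⊔ edge u v).deleteEdges {f}) := by
  have hfT : f ∈ T.edgeSet := p.edges_subset_edgeSet hf
  have hfuv : f ≠ s(u, v) := by rintro rfl; exact hnadj hfT
  have hweight : graphWeight n ω ((T ⊔ edge u v).deleteEdges {f}) + ω f =
      graphWeight n ω T + ω s(u, v) := by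
    rw [graphWeight, edgeSet_sup_edge_deleteEdges huv hfuv]
    exact finsum_mem_insert_sdiff_singleton_add ω (Set.toFinite _) hnadj hfT
  refine ⟨hT.1.isTree_sup_edge_deleteEdges hnadj huv hp hf, fun T' hT' => ?_⟩
  linarith [hT.2 T' hT']

theorem edge_mem_minSpanningTree_of_cycleCondition_general (n : ℕ)
    (ω : Sym2 (Fin n) → ℝ) (hcyc : CycleCondition n ω) :
    ∀ e ∈ (⊤ : SimpleGraph (Fin n)).edgeSet,
      ∃ T : SimpleGraph (Fin n), IsMinSpanningTree n ω T ∧ e ∈ T.edgeSet := by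
  intro e he
  induction e using Sym2.ind with
  | _ u v =>
    have huv : u ≠ v := he
    have : Nonempty (Fin n) := ⟨u⟩
    obtain ⟨T, hT⟩ := exists_isMinSpanningTree n ω
    by_cases hadj : T.Adj u v
    · exact ⟨T, hT, hadj⟩
    obtain ⟨p, hp⟩ := hT.1.connected.exists_isPath v u
    obtain ⟨f, hf, hω⟩ := hcyc.exists_mem_edges_weight_le hadj huv hp
    refine ⟨_, hT.exchange hadj huv hp hf hω, ?_⟩
    have hfuv : s(u, v) ≠ f := by rintro rfl; exact hadj (p.edges_subset_edgeSet hf)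
    simp [huv, hfuv]

/-- For `n ≥ 2`, if in every cycle of the complete graph `K_n` the maximum weight is
attained by at least two edges of the cycle, then every edge of `K_n` lies in some
ω-minimum spanning tree of `K_n`. -/
theorem edge_mem_minSpanningTree_of_cycleCondition (n : ℕ) (hn : 2 ≤ n)
    (ω : Sym2 (Fin n) → ℝ) (hcyc : CycleCondition n ω) :
    ∀ e ∈ (⊤ : SimpleGraph (Fin n)).edgeSet,
      ∃ T : SimpleGraph (Fin n), IsMinSpanningTree n ω T ∧ e ∈ T.edgeSet :=
  edge_mem_minSpanningTree_of_cycleCondition_general n ω hcyc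
end

section
/- Let n ≥ 3 and let ω be a weight function on the edges of K_n. If every edge of K_n is contained in some ω-minimum spanning tree of K_n, then ω satisfies the triangle condition: in every triangle of K_n the maximum of the three edge weights is attained by at least two of the edges. -/
/-!
If the edge `uv` lies in a minimum spanning tree `T`, deleting it splits `T` into two
components, one containing `u` and one containing `v`. A third vertex `w` lies in one of them,
say in that of `v`; then `T - uv + uw` is again a spanning tree, so minimality of `T` gives
`ω(uv) ≤ ω(uw)`. Thus an edge of a minimum spanning tree is never the strict maximum of a
triangle, and when every edge lies in one, the maximum of every triangle is attained twice.
-/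

namespace SimpleGraph

variable {V : Type*}

theorem Reachable.reachable_deleteEdges_or {G : SimpleGraph V} {u v x y : V}
    (h : G.Reachable x y) :
    (G.deleteEdges {s(u, v)}).Reachable x y ∨ (G.deleteEdges {s(u, v)}).Reachable x u ∨
      (G.deleteEdges {s(u, v)}).Reachable x v := by
  obtain ⟨p⟩ := h
  induction p with
  | nil => exact .inl .rfl
  | @cons x x' _ hxx' _ ih =>
    by_cases he : s(x, x') = s(u, v)
    · rcases Sym2.eq_iff.1 he with ⟨rfl, -⟩ | ⟨rfl, -⟩
      · exact .inr (.inl .rfl)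
      · exact .inr (.inr .rfl)
    · have hadj : (G.deleteEdges {s(u, v)}).Adj x x' := by simp [hxx', he]
      exact ih.imp hadj.reachable.trans (.imp hadj.reachable.trans hadj.reachable.trans)

variable {T : SimpleGraph V} {u v w : V}

theorem IsTree.not_reachable_deleteEdges (hT : T.IsTree) (huv : T.Adj u v)
    (hvw : (T.deleteEdges {s(u, v)}).Reachable v w) :
    ¬ (T.deleteEdges {s(u, v)}).Reachable u w := fun huw ↦
  isAcyclic_iff_forall_adj_isBridge.1 hT.isAcyclic huv (huw.trans hvw.symm)

theorem IsTree.deleteEdges_sup_edge (hT : T.IsTree) (huv : T.Adj u v)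
    (hvw : (T.deleteEdges {s(u, v)}).Reachable v w) :
    (T.deleteEdges {s(u, v)} ⊔ edge u w).IsTree := by
  set H := T.deleteEdges {s(u, v)}
  have huw : ¬ H.Reachable u w := hT.not_reachable_deleteEdges huv hvw
  have hwu : (H ⊔ edge u w).Adj w u := by
    have : w ≠ u := fun h ↦ huw (h ▸ .rfl)
    simp [edge_adj, this]
  refine ⟨(connected_iff_exists_forall_reachable _).2 ⟨u, fun x ↦ ?_⟩,
    (hT.isAcyclic.anti (deleteEdges_le _)).sup_edge_of_not_reachable huw⟩
  rcases or_self_left.1 ((hT.connected x u).reachable_deleteEdges_or (u := u) (v := v))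
    with hxu | hxv
  · exact (hxu.mono le_sup_left).symm
  · exact (((hxv.trans hvw).mono le_sup_left).trans hwu.reachable).symm

end SimpleGraph

open SimpleGraph

theorem TwoMax.of_le_max {a b c : ℝ} (ha : a ≤ max b c) (hb : b ≤ max a c)
    (hc : c ≤ max a b) : TwoMax a b c := by
  unfold TwoMax
  rcases le_total a b with h1 | h1 <;> rcases le_total b c with h2 | h2 <;>
    rcases le_total a c with h3 | h3 <;>
    simp only [max_eq_left, max_eq_right, h1, h2, h3] at ha hb hc <;>
    first
      | exact Or.inl ⟨by linarith, by linarith⟩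
      | exact Or.inr (Or.inl ⟨by linarith, by linarith⟩)
      | exact Or.inr (Or.inr ⟨by linarith, by linarith⟩)

section MinSpanningTree

variable {n : ℕ} {ω : Sym2 (Fin n) → ℝ} {T : SimpleGraph (Fin n)} {u v w : Fin n}

theorem graphWeight_deleteEdges_sup_edge (he : s(u, v) ∈ T.edgeSet) (hf : s(u, w) ∉ T.edgeSet)
    (huw : u ≠ w) :
    graphWeight n ω (T.deleteEdges {s(u, v)} ⊔ edge u w) =
      graphWeight n ω T - ω s(u, v) + ω s(u, w) := by
  have hrest : s(u, w) ∉ T.edgeSet \ {s(u, v)} := fun h ↦ hf h.1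
  have hT := finsum_mem_insert ω (Set.notMem_sdiff_of_mem (Set.mem_singleton _))
    (Set.toFinite (T.edgeSet \ {s(u, v)}))
  rw [Set.insert_sdiff_singleton, Set.insert_eq_of_mem he] at hT
  rw [graphWeight, graphWeight, edgeSet_sup, edgeSet_deleteEdges, edgeSet_edge_of_ne huw,
    Set.union_singleton, finsum_mem_insert ω hrest (Set.toFinite _), hT]
  ring

theorem IsMinSpanningTree.le_of_reachable_deleteEdges (hT : IsMinSpanningTree n ω T)
    (huv : T.Adj u v) (hvw : (T.deleteEdges {s(u, v)}).Reachable v w) :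
    ω s(u, v) ≤ ω s(u, w) := by
  rcases eq_or_ne v w with rfl | hvw'
  · exact le_rfl
  have huw := hT.1.not_reachable_deleteEdges huv hvw
  have hf : s(u, w) ∉ T.edgeSet := fun h ↦ huw (Adj.reachable (by simp [T.mem_edgeSet.1 h, hvw'.symm, huv.ne]))
  have hle := hT.2 _ (hT.1.deleteEdges_sup_edge huv hvw)
  rw [graphWeight_deleteEdges_sup_edge huv hf (fun h ↦ huw (h ▸ .rfl))] at hle
  linarith

theorem IsMinSpanningTree.le_max (hT : IsMinSpanningTree n ω T) (huv : T.Adj u v) (w : Fin n) :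
    ω s(u, v) ≤ max (ω s(u, w)) (ω s(v, w)) := by
  rcases or_self_left.1 ((hT.1.connected w u).reachable_deleteEdges_or (u := u) (v := v))
    with hwu | hwv
  · rw [Sym2.eq_swap] at hwu
    have := hT.le_of_reachable_deleteEdges huv.symm hwu.symm
    rw [Sym2.eq_swap] at this
    exact le_max_of_le_right this
  · exact le_max_of_le_left (hT.le_of_reachable_deleteEdges huv hwv.symm)

end MinSpanningTree

theorem triangleCondition_of_edges_in_minSpanningTrees_general (n : ℕ)
    (ω : Sym2 (Fin n) → ℝ)
    (hmst : ∀ e ∈ (⊤ : SimpleGraph (Fin n)).edgeSet,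
      ∃ T : SimpleGraph (Fin n), IsMinSpanningTree n ω T ∧ e ∈ T.edgeSet) :
    TriangleCondition n ω := by
  have hle (x y z : Fin n) (hxy : x ≠ y) : ω s(x, y) ≤ max (ω s(x, z)) (ω s(y, z)) := by
    obtain ⟨T, hT, he⟩ := hmst s(x, y) (by simpa using hxy)
    exact hT.le_max he z
  intro u v w huv hvw huw
  refine .of_le_max ?_ ?_ ?_
  · rw [max_comm]; exact hle u v w huv
  · simpa only [Sym2.eq_swap (a := v) (b := u), Sym2.eq_swap (a := w) (b := u)] using hle v w u hvw
  · simpa only [Sym2.eq_swap (a := w) (b := v)] using hle u w v huw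

/-- For `n ≥ 3`, if every edge of the complete graph `K_n` lies in some ω-minimum
spanning tree of `K_n`, then `ω` satisfies the triangle condition: in every triangle
the maximum of the three edge weights is attained at least twice. -/
theorem triangleCondition_of_edges_in_minSpanningTrees (n : ℕ) (hn : 3 ≤ n)
    (ω : Sym2 (Fin n) → ℝ)
    (hmst : ∀ e ∈ (⊤ : SimpleGraph (Fin n)).edgeSet,
      ∃ T : SimpleGraph (Fin n), IsMinSpanningTree n ω T ∧ e ∈ T.edgeSet) :
    TriangleCondition n ω :=
  triangleCondition_of_edges_in_minSpanningTrees_general n ω hmst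
end

section
/- Let n ≥ 3 and let ω be a weight function on the edges of K_n satisfying the triangle condition. Let C be a cycle of K_n and let e = {u, v} be an edge of C. Then ω(e) ≥ ω(f) for every edge f of C if and only if for every vertex w of C with w ≠ u and w ≠ v, the weight ω({u,v}) is a maximum of the triangle on u, v, w, i.e., ω({u,v}) ≥ ω({u,w}) and ω({u,v}) ≥ ω({v,w}). -/
/-! The triangle condition makes `ω` an ultrametric on the vertices: the weight of `{a, c}` is at
most the larger of the weights of `{a, b}` and `{b, c}`, so by induction the weight of `{a, b}` is
bounded by the largest edge weight of any walk from `a` to `b`. Since any two vertices of a closed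
walk are joined by a walk along its edges, a heaviest edge of `C` dominates every edge between
vertices of `C`, in particular those of the triangles on `u, v, w`. Conversely, if `ω {u, v}`
dominates all edges `{u, w}`, then every edge `{a, b}` of `C` avoiding `u` is dominated through the
triangle `a, u, b`. -/

theorem SimpleGraph.Walk.exists_walk_edges_subset_of_mem_support {V : Type*} [DecidableEq V]
    {G : SimpleGraph V} {x z w : V} (C : G.Walk x x) (hz : z ∈ C.support)
    (hw : w ∈ C.support) : ∃ q : G.Walk z w, q.edges ⊆ C.edges := by
  refine ⟨(C.dropUntil z hz).append (C.takeUntil w hw), fun e he ↦ ?_⟩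
  rcases List.mem_append.mp (edges_append _ _ ▸ he) with he | he
  · exact C.edges_dropUntil_subset_edges hz he
  · exact C.edges_takeUntil_subset_edges hw he

theorem TwoMax.right_le_max {a b c : ℝ} (h : TwoMax a b c) : c ≤ max a b := by
  rcases h with ⟨_, h⟩ | ⟨h, _⟩ | ⟨h, _⟩
  · exact le_max_of_le_left h
  · exact le_max_of_le_left h.ge
  · exact le_max_of_le_right h.ge

namespace TriangleCondition

variable {n : ℕ} {ω : Sym2 (Fin n) → ℝ}

theorem le_of_le_of_le (htri : TriangleCondition n ω) {a b c : Fin n} {M : ℝ}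
    (hab : a ≠ b) (hbc : b ≠ c) (hac : a ≠ c) (h₁ : ω s(a, b) ≤ M) (h₂ : ω s(b, c) ≤ M) :
    ω s(a, c) ≤ M :=
  (htri a b c hab hbc hac).right_le_max.trans (max_le h₁ h₂)

theorem le_of_forall_edges_le (htri : TriangleCondition n ω) {G : SimpleGraph (Fin n)}
    {a b : Fin n} (p : G.Walk a b) (hab : a ≠ b) {M : ℝ} (hM : ∀ e ∈ p.edges, ω e ≤ M) :
    ω s(a, b) ≤ M := by
  induction p with
  | nil => exact absurd rfl hab
  | @cons a c b hac q ih =>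
    have hfirst : ω s(a, c) ≤ M := hM _ (by simp)
    by_cases hcb : c = b
    · exact hcb ▸ hfirst
    · have hrest : ω s(c, b) ≤ M := ih hcb fun e he ↦ hM e (by simp [he])
      exact htri.le_of_le_of_le hac.ne hcb hab hfirst hrest

theorem le_of_star_le (htri : TriangleCondition n ω) {s : Set (Fin n)} {u a b : Fin n} {M : ℝ}
    (hstar : ∀ w ∈ s, w ≠ u → ω s(u, w) ≤ M) (ha : a ∈ s) (hb : b ∈ s) (hab : a ≠ b) :
    ω s(a, b) ≤ M := by
  by_cases hau : a = u
  · exact hau ▸ hstar b hb (hau ▸ hab).symm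
  by_cases hbu : b = u
  · exact Sym2.eq_swap (a := a) ▸ hbu ▸ hstar a ha (hbu ▸ hab)
  exact htri.le_of_le_of_le hau (Ne.symm hbu) hab
    (Sym2.eq_swap (a := a) ▸ hstar a ha hau) (hstar b hb hbu)

theorem le_of_mem_support (htri : TriangleCondition n ω) {G : SimpleGraph (Fin n)}
    {x z w : Fin n} (C : G.Walk x x) {M : ℝ} (hM : ∀ e ∈ C.edges, ω e ≤ M)
    (hz : z ∈ C.support) (hw : w ∈ C.support) (hzw : z ≠ w) : ω s(z, w) ≤ M := by
  obtain ⟨q, hq⟩ := C.exists_walk_edges_subset_of_mem_support hz hw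
  exact htri.le_of_forall_edges_le q hzw fun e he ↦ hM e (hq he)

end TriangleCondition

theorem maxEdge_cycle_iff_maxEdge_triangles_general (n : ℕ)
    (ω : Sym2 (Fin n) → ℝ) (htri : TriangleCondition n ω)
    (x : Fin n) (C : SimpleGraph.Walk (⊤ : SimpleGraph (Fin n)) x x)
    (u v : Fin n) (he : s(u, v) ∈ C.edges) :
    (∀ f ∈ C.edges, ω f ≤ ω s(u, v)) ↔
      (∀ w ∈ C.support, w ≠ u → w ≠ v →
        ω s(u, w) ≤ ω s(u, v) ∧ ω s(v, w) ≤ ω s(u, v)) := by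
  constructor
  · intro hmax w hw hwu hwv
    exact ⟨htri.le_of_mem_support C hmax (C.fst_mem_support_of_mem_edges he) hw (Ne.symm hwu),
      htri.le_of_mem_support C hmax (C.snd_mem_support_of_mem_edges he) hw (Ne.symm hwv)⟩
  · intro htris f hf
    have hstar : ∀ w ∈ {w | w ∈ C.support}, w ≠ u → ω s(u, w) ≤ ω s(u, v) := fun w hw hwu ↦ by
      by_cases hwv : w = v
      · exact hwv ▸ le_rfl
      · exact (htris w hw hwu hwv).1
    induction f using Sym2.ind with
    | _ a b =>
      exact htri.le_of_star_le hstar (C.fst_mem_support_of_mem_edges hf)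
        (C.snd_mem_support_of_mem_edges hf) (C.adj_of_mem_edges hf).ne

/-- Let `ω` be a weight function on the edges of the complete graph `K_n` (`n ≥ 3`)
satisfying the triangle condition, let `C` be a cycle of `K_n`, and let `{u, v}` be an
edge of `C`.  Then `{u, v}` has maximum weight among the edges of `C` if and only if
for every vertex `w` of `C` other than `u` and `v`, the weight `ω {u, v}` is a maximum
of the triangle on `u, v, w`. -/
theorem maxEdge_cycle_iff_maxEdge_triangles (n : ℕ) (hn : 3 ≤ n)
    (ω : Sym2 (Fin n) → ℝ) (htri : TriangleCondition n ω)
    (x : Fin n) (C : SimpleGraph.Walk (⊤ : SimpleGraph (Fin n)) x x) (hC : C.IsCycle)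
    (u v : Fin n) (huv : u ≠ v) (he : s(u, v) ∈ C.edges) :
    (∀ f ∈ C.edges, ω f ≤ ω s(u, v)) ↔
      (∀ w ∈ C.support, w ≠ u → w ≠ v →
        ω s(u, w) ≤ ω s(u, v) ∧ ω s(v, w) ≤ ω s(u, v)) :=
  maxEdge_cycle_iff_maxEdge_triangles_general n ω htri x C u v he
end

section
/- Let M be a matroid on the ground set Fin n. For each base B of M let e_B ∈ ℝ^n denote its indicator vector (the sum of the standard unit vectors indexed by the elements of B), and let P_M be the convex hull of the set of all such vectors e_B. Let ω ∈ ℝ^n and consider the linear functional x ↦ ∑_i ω_i x_i on ℝ^n. Then the set of points of P_M at which this functional attains its minimum over P_M is exactly the convex hull of the vectors e_B over all ω-minimum bases B of M. -/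
open Matroid

/-- The linear functional `x ↦ ∑ i, ω i * x i` on `ℝ^n`. -/
noncomputable def weightLM (n : ℕ) (ω : Fin n → ℝ) : (Fin n → ℝ) →ₗ[ℝ] ℝ where
  toFun x := ∑ i, ω i * x i
  map_add' x y := by simp [mul_add, Finset.sum_add_distrib]
  map_smul' c x := by
    simp only [Pi.smul_apply, smul_eq_mul, RingHom.id_apply, Finset.mul_sum]
    exact Finset.sum_congr rfl fun i _ => by ring

lemma weightLM_indicator (n : ℕ) (ω : Fin n → ℝ) (B : Set (Fin n)) :
    weightLM n ω (B.indicator (fun _ => (1 : ℝ))) = baseWeight ω B := by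
  classical
  have : baseWeight ω B = ∑ i ∈ B.toFinset, ω i := by
    rw [baseWeight, ← finsum_mem_coe_finset, Set.coe_toFinset]
  rw [this]
  simp only [weightLM, LinearMap.coe_mk, AddHom.coe_mk, Set.indicator_apply]
  rw [Finset.sum_congr rfl (fun i (_ : i ∈ Finset.univ) =>
    (by split <;> simp [*] : ω i * (if i ∈ B then (1:ℝ) else 0) = if i ∈ B then ω i else 0))]
  simp only [← Set.mem_toFinset]
  rw [Finset.sum_ite_mem, Finset.univ_inter]

/-- The set of points of the convex hull of a finite set minimizing a linear functional
is the convex hull of the minimizing points of the finite set. -/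
lemma argmin_hull {E : Type*} [AddCommGroup E] [Module ℝ E] (s : Finset E)
    (hne : s.Nonempty) (f : E →ₗ[ℝ] ℝ) :
    {x ∈ convexHull ℝ (s : Set E) | ∀ z ∈ convexHull ℝ (s : Set E), f x ≤ f z} =
      convexHull ℝ {y ∈ (s : Set E) | ∀ z ∈ (s : Set E), f y ≤ f z} := by
  obtain ⟨y0, hy0s, hy0min⟩ := s.exists_min_image f hne
  set m := f y0 with hm
  have hlow : ∀ x ∈ convexHull ℝ (s : Set E), m ≤ f x := by
    intro x hx
    have hconv : Convex ℝ {w : E | m ≤ f w} := convex_halfSpace_ge f.isLinear m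
    have := convexHull_min (fun z hz => hy0min z hz) hconv
    exact this hx
  ext x
  constructor
  · rintro ⟨hx, hminx⟩
    have hfx : f x = m := le_antisymm
      (hminx y0 (subset_convexHull ℝ _ hy0s)) (hlow x hx)
    rw [Finset.convexHull_eq] at hx
    obtain ⟨w, hw0, hw1, hwx⟩ := hx
    have key : ∀ p ∈ s, w p ≠ 0 → f p = m := by
      intro p hp hwp
      by_contra hne'
      have hpm : m < f p := lt_of_le_of_ne (hy0min p hp) (Ne.symm hne')
      have hsum : ∑ q ∈ s, w q • f q = f x := by
        rw [← hwx, Finset.centerMass, hw1, inv_one, one_smul, map_sum]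
        simp [map_smul]
      have hsum2 : ∑ q ∈ s, w q * m = m := by
        rw [← Finset.sum_mul, hw1, one_mul]
      have hge : ∀ q ∈ s, w q * m ≤ w q * f q := fun q hq =>
        mul_le_mul_of_nonneg_left (hy0min q hq) (hw0 q hq)
      have hstrict : ∑ q ∈ s, w q * m < ∑ q ∈ s, w q * f q := by
        apply Finset.sum_lt_sum hge
        exact ⟨p, hp, mul_lt_mul_of_pos_left hpm
          (lt_of_le_of_ne (hw0 p hp) (Ne.symm hwp))⟩
      rw [hsum2] at hstrict
      have : ∑ q ∈ s, w q * f q = m := by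
        rw [← hfx, ← hsum]; simp [smul_eq_mul]
      linarith
    have hx' : (s.filter (fun p => w p ≠ 0)).centerMass w id = x := by
      rw [Finset.centerMass_filter_ne_zero]; exact hwx
    have hsumf : ∑ q ∈ s.filter (fun p => w p ≠ 0), w q = 1 := by
      rw [Finset.sum_filter_ne_zero]; exact hw1
    have : x ∈ convexHull ℝ {y ∈ (s : Set E) | ∀ z ∈ (s : Set E), f y ≤ f z} := by
      rw [← hx']
      apply Finset.centerMass_mem_convexHull
      · intro p hp; exact hw0 p (Finset.mem_filter.mp hp).1
      · rw [hsumf]; norm_num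
      · intro p hp
        obtain ⟨hps, hwp⟩ := Finset.mem_filter.mp hp
        refine ⟨hps, fun z hz => ?_⟩
        rw [id, key p hps hwp]; exact hy0min z hz
    exact this
  · intro hx
    have hsub : {y ∈ (s : Set E) | ∀ z ∈ (s : Set E), f y ≤ f z} ⊆ (s : Set E) :=
      fun y hy => hy.1
    have hxS : x ∈ convexHull ℝ (s : Set E) := convexHull_mono hsub hx
    refine ⟨hxS, fun z hz => ?_⟩
    have hup : f x ≤ m := by
      have hconv : Convex ℝ {w : E | f w ≤ m} := convex_halfSpace_le f.isLinear m
      exact convexHull_min (fun y hy => hy.2 y0 hy0s) hconv hx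
    exact hup.trans (hlow z hz)

/-- Let `M` be a matroid on `Fin n`, let `P_M ⊆ ℝ^n` be the convex hull of the indicator
vectors of the bases of `M` (the matroid polytope of `M`), and let `ω ∈ ℝ^n`.  Then the
set of points of `P_M` minimizing the linear functional `x ↦ ∑ i, ω i * x i` over `P_M`
is exactly the convex hull of the indicator vectors of the ω-minimum bases of `M`. -/
theorem matroidPolytope_argmin_eq_convexHull_minBases (n : ℕ) (M : Matroid (Fin n))
    (hE : M.E = Set.univ) (ω : Fin n → ℝ) :
    {x ∈ convexHull ℝ {y : Fin n → ℝ | ∃ B : Set (Fin n), M.IsBase B ∧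
        y = B.indicator (fun _ => (1 : ℝ))} |
      ∀ z ∈ convexHull ℝ {y : Fin n → ℝ | ∃ B : Set (Fin n), M.IsBase B ∧
        y = B.indicator (fun _ => (1 : ℝ))},
        ∑ i, ω i * x i ≤ ∑ i, ω i * z i} =
    convexHull ℝ {y : Fin n → ℝ | ∃ B : Set (Fin n), IsMinBase M ω B ∧
        y = B.indicator (fun _ => (1 : ℝ))} := by
  classical
  set S : Set (Fin n → ℝ) :=
    {y | ∃ B : Set (Fin n), M.IsBase B ∧ y = B.indicator fun _ => (1:ℝ)} with hSdef
  have hfin : S.Finite := Set.Finite.subset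
    (Set.finite_range (fun B : Set (Fin n) => B.indicator fun _ => (1:ℝ)))
    (by rintro y ⟨B, _, rfl⟩; exact ⟨B, rfl⟩)
  have hcoe : (hfin.toFinset : Set (Fin n → ℝ)) = S := hfin.coe_toFinset
  obtain ⟨B0, hB0⟩ := M.exists_isBase
  have hne : hfin.toFinset.Nonempty := ⟨_, hfin.mem_toFinset.mpr ⟨B0, hB0, rfl⟩⟩
  have key := argmin_hull hfin.toFinset hne (weightLM n ω)
  rw [hcoe] at key
  have hmin : {y ∈ S | ∀ z ∈ S, weightLM n ω y ≤ weightLM n ω z} =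
      {y : Fin n → ℝ | ∃ B : Set (Fin n), IsMinBase M ω B ∧
        y = B.indicator fun _ => (1:ℝ)} := by
    ext y
    constructor
    · rintro ⟨⟨B, hB, rfl⟩, hmy⟩
      refine ⟨B, ⟨hB, fun B' hB' => ?_⟩, rfl⟩
      have := hmy _ ⟨B', hB', rfl⟩
      rwa [weightLM_indicator, weightLM_indicator] at this
    · rintro ⟨B, ⟨hB, hmy⟩, rfl⟩
      refine ⟨⟨B, hB, rfl⟩, ?_⟩
      rintro z ⟨B', hB', rfl⟩
      rw [weightLM_indicator, weightLM_indicator]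
      exact hmy B' hB'
  rw [hmin] at key
  exact key
end
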